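/- arXiv:2002.06965 — 9 statements merged into one kernel-verified Lean document; each statement's English description precedes it below -/
import Mathlib

section
/- Let $S$ be a $\mathbb{Z}$-graded ring such that $S_1 S_{-1} = S_0$. Then for every positive integer $m$, $S_m = (S_1)^m$ (the additive subgroup generated by $m$-fold products of elements of $S_1$), provided also $S_0 S_n = S_n$ for all $n$. -/
/-- The product of two additive subgroups of a (possibly non-unital) ring: the additive
subgroup generated by products. -/
def subMul {S : Type} [NonUnitalRing S] (A B : AddSubgroup S) : AddSubgroup S :=
  AddSubgroup.closure {x | ∃ a ∈ A, ∃ b ∈ B, x = a * b}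

/-- Iterated products of an additive subgroup: `subPow A m` is the additive subgroup
generated by `(m+1)`-fold products of elements of `A`, i.e. `A^(m+1)`. -/
def subPow {S : Type} [NonUnitalRing S] (A : AddSubgroup S) : ℕ → AddSubgroup S
  | 0 => A
  | n + 1 => subMul (subPow A n) A

lemma mul_mem_subMul {S : Type} [NonUnitalRing S] {A B : AddSubgroup S} {a b : S}
    (ha : a ∈ A) (hb : b ∈ B) : a * b ∈ subMul A B :=
  AddSubgroup.subset_closure ⟨a, ha, b, hb, rfl⟩

lemma subMul_le {S : Type} [NonUnitalRing S] {A B C : AddSubgroup S} :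
    subMul A B ≤ C ↔ ∀ a ∈ A, ∀ b ∈ B, a * b ∈ C := by
  rw [subMul, AddSubgroup.closure_le]
  constructor
  · intro h a ha b hb; exact h ⟨a, ha, b, hb, rfl⟩
  · rintro h x ⟨a, ha, b, hb, rfl⟩; exact h a ha b hb

lemma subMul_mono {S : Type} [NonUnitalRing S] {A A' B B' : AddSubgroup S}
    (hA : A ≤ A') (hB : B ≤ B') : subMul A B ≤ subMul A' B' :=
  subMul_le.2 fun a ha b hb => mul_mem_subMul (hA ha) (hB hb)

lemma subMul_assoc {S : Type} [NonUnitalRing S] (A B C : AddSubgroup S) :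
    subMul (subMul A B) C = subMul A (subMul B C) := by
  apply le_antisymm
  · rw [subMul_le]
    intro x hx c hc
    refine AddSubgroup.closure_induction (p := fun x _ => x * c ∈ subMul A (subMul B C))
      ?_ ?_ ?_ ?_ hx
    · rintro y ⟨a, ha, b, hb, rfl⟩
      rw [mul_assoc]
      exact mul_mem_subMul ha (mul_mem_subMul hb hc)
    · simpa using (subMul A (subMul B C)).zero_mem
    · intro y z _ _ hy hz; rw [add_mul]; exact add_mem hy hz
    · intro y _ hy; rw [neg_mul]; exact neg_mem hy
  · rw [subMul_le]
    intro a ha x hx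
    refine AddSubgroup.closure_induction (p := fun x _ => a * x ∈ subMul (subMul A B) C)
      ?_ ?_ ?_ ?_ hx
    · rintro y ⟨b, hb, c, hc, rfl⟩
      rw [← mul_assoc]
      exact mul_mem_subMul (mul_mem_subMul ha hb) hc
    · simpa using (subMul (subMul A B) C).zero_mem
    · intro y z _ _ hy hz; rw [mul_add]; exact add_mem hy hz
    · intro y _ hy; rw [mul_neg]; exact neg_mem hy

lemma subMul_subPow {S : Type} [NonUnitalRing S] (A : AddSubgroup S) (n : ℕ) :
    subMul A (subPow A n) = subPow A (n + 1) := by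
  induction n with
  | zero => rfl
  | succ n ih =>
    show subMul A (subMul (subPow A n) A) = subMul (subPow A (n + 1)) A
    rw [← subMul_assoc, ih]

/-- If `S` is `ℤ`-graded with `S₀Sₙ = Sₙ = SₙS₀` for all `n` and `S₁S₋₁ = S₀`, then
`Sₘ = (S₁)^m` for every positive integer `m` (here `m = k + 1`). -/
theorem gradedPiece_eq_pow_of_pos {S : Type} [NonUnitalRing S] (G : ℤ → AddSubgroup S)
    (hdirect : DirectSum.IsInternal G)
    (hgraded : ∀ n m : ℤ, subMul (G n) (G m) ≤ G (n + m))
    (h0 : ∀ n : ℤ, subMul (G 0) (G n) = G n ∧ subMul (G n) (G 0) = G n)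
    (h1 : subMul (G 1) (G (-1)) = G 0) :
    ∀ k : ℕ, G ((k : ℤ) + 1) = subPow (G 1) k := by
  intro k
  induction k with
  | zero => norm_num [subPow]
  | succ k ih =>
    apply le_antisymm
    · -- G (k+2) ≤ subPow (G 1) (k+1)
      have e1 : G ((k : ℤ) + 1 + 1) = subMul (G 1) (subMul (G (-1)) (G ((k : ℤ) + 1 + 1))) := by
        rw [← subMul_assoc, h1, (h0 _).1]
      have e2 : subMul (G (-1)) (G ((k : ℤ) + 1 + 1)) ≤ G ((k : ℤ) + 1) := by
        have := hgraded (-1) ((k : ℤ) + 1 + 1)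
        convert this using 2
        ring
      calc G ((k : ℤ) + 1 + 1) = subMul (G 1) (subMul (G (-1)) (G ((k : ℤ) + 1 + 1))) := e1
        _ ≤ subMul (G 1) (G ((k : ℤ) + 1)) := subMul_mono le_rfl e2
        _ = subMul (G 1) (subPow (G 1) k) := by rw [ih]
        _ = subPow (G 1) (k + 1) := subMul_subPow _ _
    · -- subPow (G 1) (k+1) ≤ G (k+2)
      show subMul (subPow (G 1) k) (G 1) ≤ _
      rw [← ih]
      exact le_trans (hgraded ((k : ℤ) + 1) 1) le_rfl
end

section
/- A directed graph $E$ satisfies Condition (Y) if and only if it satisfies Condition (Y1), provided that $E$ is row-finite and has no sinks. -/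
/-- A directed graph: vertices, edges, and source/range maps. -/
structure DirGraph where
  V : Type
  Ed : Type
  s : Ed → V
  r : Ed → V

namespace DirGraph

variable (E : DirGraph)

/-- A (finite) path is a list of composable edges. -/
def IsPath (l : List E.Ed) : Prop := l.Chain' (fun e f => E.r e = E.s f)

/-- The list of edges `l` starts at the vertex `v` (vacuously true for the empty list). -/
def StartsAt (v : E.V) (l : List E.Ed) : Prop := ∀ e ∈ l.head?, E.s e = v

/-- The end vertex of a path `l` which starts at `v`. -/
def endV (v : E.V) (l : List E.Ed) : E.V := l.getLast?.elim v E.r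

/-- A nonempty list of edges `l` ends at the vertex `w`. -/
def EndsAt (l : List E.Ed) (w : E.V) : Prop := ∃ e, l.getLast? = some e ∧ E.r e = w

/-- An infinite path is a sequence of composable edges. -/
def IsInfPath (p : ℕ → E.Ed) : Prop := ∀ n, E.r (p n) = E.s (p (n + 1))

/-- `E` is row-finite: every vertex emits only finitely many edges. -/
def RowFinite : Prop := ∀ v : E.V, {e : E.Ed | E.s e = v}.Finite

/-- `E` has no sinks: every vertex emits at least one edge. -/
def NoSinks : Prop := ∀ v : E.V, ∃ e : E.Ed, E.s e = v

/-- Condition (Y): for every `k ≥ 1` and every infinite path `p`, some (nonempty) initial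
subpath of `p` (of length `n`, ending at the vertex `E.s (p n)`) admits a finite path `β`
with the same range and with length exceeding `n` by exactly `k`. -/
def CondY : Prop := ∀ k : ℕ, 1 ≤ k → ∀ p : ℕ → E.Ed, E.IsInfPath p →
  ∃ n : ℕ, 1 ≤ n ∧ ∃ β : List E.Ed, E.IsPath β ∧ β.length = n + k ∧ E.EndsAt β (E.s (p n))

/-- Condition (Y1): Condition (Y) restricted to `k = 1`. -/
def CondY1 : Prop := ∀ p : ℕ → E.Ed, E.IsInfPath p →
  ∃ n : ℕ, 1 ≤ n ∧ ∃ β : List E.Ed, E.IsPath β ∧ β.length = n + 1 ∧ E.EndsAt β (E.s (p n))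

/-- `r(α)` is a turning node for the path `α` (starting at `v`): there is a path of length
`|α| + 1` with the same range as `α`. -/
def Turning (v : E.V) (α : List E.Ed) : Prop :=
  ∃ β : List E.Ed, E.IsPath β ∧ β.length = α.length + 1 ∧ E.EndsAt β (E.endV v α)

/-- The set `Xₙ(v)`: paths of length `n` starting at `v`, all of whose nonempty initial
subpaths end at non-turning nodes. -/
def Xset (n : ℕ) (v : E.V) : Set (List E.Ed) :=
  {l | E.IsPath l ∧ E.StartsAt v l ∧ l.length = n ∧
    ∀ i : ℕ, 1 ≤ i → i ≤ n → ¬ E.Turning v (l.take i)}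

end DirGraph

/-- For a row-finite directed graph with no sinks, Condition (Y) is equivalent to
Condition (Y1). -/
theorem condY_iff_condY1 (E : DirGraph) (hrf : E.RowFinite) (hns : E.NoSinks) :
    E.CondY ↔ E.CondY1 := by
  constructor
  · intro h p hp
    exact h 1 le_rfl p hp
  · intro h1 k hk
    induction k with
    | zero => omega
    | succ k ih =>
      rcases Nat.eq_or_lt_of_le hk with hk1 | hk1
      · intro p hp
        have hk0 : k = 0 := by omega
        subst hk0
        exact h1 p hp
      · intro p hp
        obtain ⟨n, hn, β, hβpath, hβlen, e₀, he₀, hre₀⟩ := ih (by omega) p hp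
        have hL : 1 ≤ β.length := by omega
        set L := β.length with hLdef
        -- define the infinite path q = β followed by p shifted by n
        set q : ℕ → E.Ed := fun i => if h : i < L then β.get ⟨i, h⟩ else p (n + (i - L))
          with hqdef
        have hqlt : ∀ i (h : i < L), q i = β.get ⟨i, h⟩ := by
          intro i h; simp [hqdef, h]
        have hqge : ∀ i, L ≤ i → q i = p (n + (i - L)) := by
          intro i h; simp [hqdef, Nat.not_lt.mpr h]
        have he₀' : ∀ i (h : i < L), i + 1 = L → β.get ⟨i, h⟩ = e₀ := by
          intro i h hi
          have h2 := β.getLast?_eq_getElem?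
          rw [he₀] at h2
          have h3 : β.length - 1 = i := by omega
          rw [h3, List.getElem?_eq_getElem h] at h2
          simpa [List.get_eq_getElem] using h2.symm
        have hq : E.IsInfPath q := by
          intro i
          by_cases h1' : i + 1 < L
          · rw [hqlt i (by omega), hqlt (i+1) h1']
            exact List.isChain_iff_getElem.mp hβpath i (by omega)
          · by_cases h2 : i + 1 = L
            · rw [hqlt i (by omega), hqge (i+1) (by omega), he₀' i (by omega) h2, hre₀]
              have h4 : n + (i + 1 - L) = n := by omega
              rw [h4]
            · rw [hqge i (by omega), hqge (i+1) (by omega)]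
              have : n + (i + 1 - L) = n + (i - L) + 1 := by omega
              rw [this]
              exact hp _
        obtain ⟨m, hm, γ, hγpath, hγlen, hγend⟩ := h1 q hq
        by_cases hmL : m < L
        · -- extend γ with the rest of β
          refine ⟨n, hn, γ ++ β.drop m, ?_, ?_, ?_⟩
          · refine List.isChain_append.mpr ⟨hγpath, hβpath.drop m, ?_⟩
            intro x hx y hy
            obtain ⟨e, he, hre⟩ := hγend
            rw [he] at hx
            have hx' : x = e := by simpa using hx.symm
            rw [List.head?_drop] at hy
            have hy' : y = β[m]'hmL := by
              rw [List.getElem?_eq_getElem hmL] at hy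
              simpa using hy.symm
            rw [hx', hy', hre, hqlt m hmL]
            simp [List.get_eq_getElem]
          · rw [List.length_append, List.length_drop, hγlen]
            omega
          · have hdropne : β.drop m ≠ [] := by
              simp [List.drop_eq_nil_iff]
              omega
            refine ⟨e₀, ?_, hre₀⟩
            rw [List.getLast?_append_of_ne_nil _ hdropne, List.getLast?_drop,
              if_neg (by omega)]
            exact he₀
        · -- γ already ends beyond β
          refine ⟨n + (m - L), by omega, γ, hγpath, by omega, ?_⟩
          rw [hqge m (by omega)] at hγend
          exact hγend
end

section
/- Let $E$ be a row-finite directed graph with no sinks satisfying Condition (Y1), and let $v$ be a vertex of $E$. Define inductively: $X_1$ is the set of edges $f$ with $s(f) = v$ such that $r(f)$ is not a turning node for $f$, and $X_{n+1}$ is the set of paths $\alpha f$ of length $n+1$ with $\alpha \in X_n$, $s(f) = r(\alpha)$, and $r(f)$ not a turning node for $\alpha f$. Then there exists $n \in \mathbb{N}$ with $X_n = \emptyset$. -/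
section Aux

variable {E : DirGraph}

lemma aux_isPath_take {l : List E.Ed} (h : E.IsPath l) (m : ℕ) : E.IsPath (l.take m) :=
  List.IsChain.take h m

lemma aux_startsAt_take {v : E.V} {l : List E.Ed} (h : E.StartsAt v l) (m : ℕ) :
    E.StartsAt v (l.take m) := by
  intro e he
  apply h
  cases m with
  | zero => simp at he
  | succ m =>
    cases l with
    | nil => simp at he
    | cons a t => simpa using he

lemma aux_mem_Xset_take {n m : ℕ} {v : E.V} {l : List E.Ed} (h : l ∈ E.Xset n v) (hm : m ≤ n) :
    l.take m ∈ E.Xset m v := by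
  obtain ⟨hp, hs, hl, ht⟩ := h
  refine ⟨aux_isPath_take hp m, aux_startsAt_take hs m, ?_, ?_⟩
  · simp [List.length_take, hl, Nat.min_eq_left hm]
  · intro i hi1 him
    rw [List.take_take, min_eq_left him]
    exact ht i hi1 (him.trans hm)

lemma aux_s_eq_endV {v : E.V} {l : List E.Ed} {e : E.Ed} (hp : E.IsPath (l ++ [e]))
    (hs : E.StartsAt v (l ++ [e])) : E.s e = E.endV v l := by
  cases l with
  | nil =>
    have := hs e (by simp)
    simpa [DirGraph.endV] using this
  | cons a t =>
    rw [DirGraph.IsPath, List.Chain', List.isChain_append] at hp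
    have hx := List.getLast?_eq_getLast_of_ne_nil (l := a :: t) (by simp)
    have := hp.2.2 _ hx e rfl
    simp [DirGraph.endV, hx, this]

/-- The key "König" step: if arbitrarily long members of the `Xset`s extend `l`,
then some one-edge extension of `l` has the same property. -/
lemma aux_good_step (hrf : E.RowFinite) {v : E.V} {l : List E.Ed}
    (hg : ∀ n, ∃ l' ∈ E.Xset (l.length + n) v, l'.take l.length = l) :
    ∃ e, ∀ n, ∃ l' ∈ E.Xset ((l ++ [e]).length + n) v, l'.take (l ++ [e]).length = l ++ [e] := by
  set k := l.length with hk
  have hw : ∀ n : ℕ, ∃ l' ∈ E.Xset (k + (n + 1)) v, l'.take k = l := fun n => hg (n + 1)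
  choose f hf1 hf2 using hw
  have hlen : ∀ n, (f n).length = k + (n + 1) := fun n => (hf1 n).2.2.1
  have hklt : ∀ n, k < (f n).length := fun n => by rw [hlen n]; omega
  set g : ℕ → E.Ed := fun n => (f n).get ⟨k, hklt n⟩ with hgdef
  have htake : ∀ n, (f n).take (k + 1) = l ++ [g n] := by
    intro n
    rw [← List.take_concat_get' (f n) k (hklt n), hf2 n]
    rfl
  have hsg : ∀ n, E.s (g n) = E.endV v l := by
    intro n
    have hp : E.IsPath ((f n).take (k + 1)) := aux_isPath_take (hf1 n).1 _
    have hs : E.StartsAt v ((f n).take (k + 1)) := aux_startsAt_take (hf1 n).2.1 _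
    rw [htake n] at hp hs
    exact aux_s_eq_endV hp hs
  have hfin : {e : E.Ed | E.s e = E.endV v l}.Finite := hrf _
  haveI : Finite {e : E.Ed // E.s e = E.endV v l} := hfin.to_subtype
  obtain ⟨y, hy⟩ := Finite.exists_infinite_fiber
    (fun n : ℕ => (⟨g n, hsg n⟩ : {e : E.Ed // E.s e = E.endV v l}))
  refine ⟨y.1, ?_⟩
  have hinf : {n : ℕ | g n = y.1}.Infinite := by
    have h1 := Set.infinite_coe_iff.mp hy
    refine h1.mono ?_
    intro n hn
    simp only [Set.mem_preimage, Set.mem_singleton_iff] at hn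
    simpa [Set.mem_setOf_eq] using congrArg Subtype.val hn
  intro m
  obtain ⟨n, hn, hmn⟩ := hinf.exists_gt m
  have hle : (k + 1) + m ≤ k + (n + 1) := by omega
  refine ⟨(f n).take ((k + 1) + m), ?_, ?_⟩
  · have := aux_mem_Xset_take (hf1 n) hle
    have hlenle : (l ++ [y.1]).length + m = (k + 1) + m := by simp [hk]
    rwa [hlenle]
  · have hlen1 : (l ++ [y.1]).length = k + 1 := by simp [hk]
    rw [hlen1, List.take_take, min_eq_left (by omega), htake n, hn]

end Aux

/-- If `E` is row-finite, has no sinks and satisfies Condition (Y1), then for every vertex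
`v` some set `Xₙ(v)` is empty. -/
theorem exists_Xset_empty (E : DirGraph) (hrf : E.RowFinite) (hns : E.NoSinks)
    (hY1 : E.CondY1) (v : E.V) :
    ∃ n : ℕ, 1 ≤ n ∧ E.Xset n v = ∅ := by
  by_contra hcon
  push_neg at hcon
  have hne : ∀ n : ℕ, ∃ l, l ∈ E.Xset n v := by
    intro n
    cases n with
    | zero =>
      exact ⟨[], List.isChain_nil, fun e he => by simp at he, rfl,
        fun i h1 h2 => absurd (h1.trans h2) (by omega)⟩
    | succ n =>
      exact hcon (n + 1) (by omega)
  -- the "Good" predicate: arbitrarily long members of the Xsets extend `l`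
  have h0 : ∀ n, ∃ l' ∈ E.Xset (([] : List E.Ed).length + n) v,
      l'.take ([] : List E.Ed).length = ([] : List E.Ed) := by
    intro n
    obtain ⟨l, hl⟩ := hne n
    exact ⟨l, by simpa using hl, by simp⟩
  have hstep : ∀ l : List E.Ed,
      (∀ n, ∃ l' ∈ E.Xset (l.length + n) v, l'.take l.length = l) →
      ∃ e, ∀ n, ∃ l' ∈ E.Xset ((l ++ [e]).length + n) v,
        l'.take (l ++ [e]).length = l ++ [e] := fun _ hl => aux_good_step hrf hl
  choose F hF using hstep
  let L : ℕ → {l : List E.Ed //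
      ∀ n, ∃ l' ∈ E.Xset (l.length + n) v, l'.take l.length = l} := fun n =>
    Nat.rec ⟨[], h0⟩ (fun _ ih => ⟨ih.1 ++ [F ih.1 ih.2], hF ih.1 ih.2⟩) n
  have hLsucc : ∀ n, (L (n + 1)).1 = (L n).1 ++ [F (L n).1 (L n).2] := fun _ => rfl
  set p : ℕ → E.Ed := fun n => F (L n).1 (L n).2 with hp
  have hlen : ∀ n, (L n).1.length = n := by
    intro n
    induction n with
    | zero => rfl
    | succ n ih => rw [hLsucc]; simp [ih]
  have hmem : ∀ n, (L n).1 ∈ E.Xset n v := by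
    intro n
    obtain ⟨l', hl', ht⟩ := (L n).2 0
    have hl'len : l'.length = (L n).1.length := by
      have := hl'.2.2.1
      omega
    have : l' = (L n).1 := by
      rw [← ht, ← hl'len, List.take_length]
    rw [← this]
    have hn : (L n).1.length + 0 = n := by simp [hlen n]
    rwa [hn] at hl'
  have hinf : E.IsInfPath p := by
    intro n
    have hpath : E.IsPath (L (n + 2)).1 := (hmem (n + 2)).1
    have heq : (L (n + 2)).1 = ((L n).1 ++ [p n]) ++ [p (n + 1)] :=
      calc (L (n + 2)).1 = (L (n + 1)).1 ++ [p (n + 1)] := hLsucc (n + 1)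
        _ = ((L n).1 ++ [p n]) ++ [p (n + 1)] := by rw [hLsucc n]
    rw [heq, DirGraph.IsPath, List.Chain', List.isChain_append] at hpath
    exact hpath.2.2 (p n) List.getLast?_concat (p (n + 1)) rfl
  have hsp : ∀ n, E.s (p n) = E.endV v (L n).1 := by
    intro n
    have h1 : E.IsPath ((L n).1 ++ [p n]) := by rw [← hLsucc]; exact (hmem (n + 1)).1
    have h2 : E.StartsAt v ((L n).1 ++ [p n]) := by rw [← hLsucc]; exact (hmem (n + 1)).2.1
    exact aux_s_eq_endV h1 h2
  obtain ⟨n, hn1, β, hβp, hβl, hβe⟩ := hY1 p hinf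
  have hm := hmem n
  refine hm.2.2.2 n hn1 le_rfl ⟨β, hβp, ?_, ?_⟩
  · have h : (L n).1.take n = (L n).1 := List.take_of_length_le (le_of_eq (hlen n))
    rw [h, hlen n]
    exact hβl
  · have h : (L n).1.take n = (L n).1 := List.take_of_length_le (le_of_eq (hlen n))
    rw [h, ← hsp n]
    exact hβe
end

section
/- Let $E$ be a row-finite directed graph with no sinks, and suppose that for every vertex $v$ and every $n\in\mathbb{N}$, the set $X_n(v)$ of paths of length $n$ starting at $v$ all of whose nonempty initial subpaths end at non-turning nodes is non-empty. Then there exists an infinite path $p$ starting at $v$ such that for every $n$, the range of the length-$n$ initial subpath of $p$ is not a turning node for that subpath; in particular, $E$ fails Condition (Y1). -/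
namespace DirGraph

variable (E : DirGraph)

/-- Truncation preserves membership in the `Xset`s. -/
theorem take_mem_Xset {E : DirGraph} {v : E.V} {n m : ℕ} (hnm : n ≤ m) {l : List E.Ed}
    (hl : l ∈ E.Xset m v) : l.take n ∈ E.Xset n v := by
  obtain ⟨hp, hs, hlen, ht⟩ := hl
  refine ⟨hp.prefix (List.take_prefix n l), ?_, by simp [hlen, Nat.min_eq_left hnm], ?_⟩
  · intro e he
    apply hs
    rw [List.head?_take] at he
    split at he
    · simp at he
    · exact he
  · intro i h1 hin
    rw [List.take_take, Nat.min_eq_left hin]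
    exact ht i h1 (le_trans hin hnm)

/-- Row-finiteness gives finiteness of the set of paths of a given length from a vertex. -/
theorem paths_finite {E : DirGraph} (hrf : E.RowFinite) :
    ∀ (n : ℕ) (v : E.V), {l : List E.Ed | E.IsPath l ∧ E.StartsAt v l ∧ l.length = n}.Finite := by
  intro n
  induction n with
  | zero =>
    intro v
    apply Set.Finite.subset (Set.finite_singleton ([] : List E.Ed))
    rintro l ⟨-, -, hlen⟩
    simp [List.eq_nil_of_length_eq_zero hlen]
  | succ n ih =>
    intro v
    apply Set.Finite.subset
      (Set.Finite.biUnion (hrf v) (fun e _ =>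
        ((ih (E.r e)).image (fun l => e :: l))))
    rintro l ⟨hp, hs, hlen⟩
    match l with
    | [] => simp at hlen
    | e :: t =>
      have he : E.s e = v := hs e rfl
      rw [DirGraph.IsPath, List.Chain', List.isChain_cons] at hp
      refine Set.mem_biUnion he ⟨t, ⟨hp.2, ?_, by simpa using hlen⟩, rfl⟩
      intro f hf
      exact (hp.1 f hf).symm

open CategoryTheory in
/-- The inverse system of the sets `Xₙ(v)` under truncation. -/
def XF (E : DirGraph) (v : E.V) : ℕᵒᵖ ⥤ Type where
  obj n := ↥(E.Xset n.unop v)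
  map {n m} f := TypeCat.ofHom fun l => ⟨(l : List E.Ed).take m.unop, take_mem_Xset (leOfHom f.unop) l.2⟩
  map_id n := by
    apply ConcreteCategory.hom_ext; intro l
    apply Subtype.ext
    exact List.take_of_length_le (le_of_eq l.2.2.2.1)
  map_comp {n m k} f g := by
    apply ConcreteCategory.hom_ext; intro l
    apply Subtype.ext
    simp only [types_comp_apply, TypeCat.ofHom_apply]
    rw [List.take_take, Nat.min_eq_left (leOfHom g.unop)]

open CategoryTheory in
theorem XF_map_val (E : DirGraph) (v : E.V) {n m : ℕᵒᵖ} (f : n ⟶ m)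
    (l : (DirGraph.XF E v).obj n) :
    ((DirGraph.XF E v).map f l).1 = l.1.take m.unop := rfl

end DirGraph

open CategoryTheory in
/-- If `E` is row-finite with no sinks and all the sets `Xₙ(v)` are non-empty, then there
is an infinite path `p` starting at `v` such that for every `n ≥ 1` the range of the
length-`n` initial subpath of `p` is not a turning node for that subpath; in particular,
`E` fails Condition (Y1). -/
theorem exists_infPath_no_turning (E : DirGraph) (hrf : E.RowFinite) (hns : E.NoSinks)
    (v : E.V) (h : ∀ n : ℕ, (E.Xset n v).Nonempty) :
    (∃ p : ℕ → E.Ed, E.IsInfPath p ∧ E.s (p 0) = v ∧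
      ∀ n : ℕ, 1 ≤ n → ¬ E.Turning v ((List.range n).map p)) ∧ ¬ E.CondY1 := by
  haveI : ∀ j : ℕᵒᵖ, Finite ((DirGraph.XF E v).obj j) := by
    intro j
    have : (E.Xset j.unop v).Finite := by
      apply Set.Finite.subset (DirGraph.paths_finite hrf j.unop v)
      rintro l ⟨hp, hs, hlen, -⟩
      exact ⟨hp, hs, hlen⟩
    exact this
  haveI : ∀ j : ℕᵒᵖ, Nonempty ((DirGraph.XF E v).obj j) := by
    intro j
    exact (h j.unop).to_subtype
  obtain ⟨u, hu⟩ := nonempty_sections_of_finite_inverse_system (DirGraph.XF E v)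
  set uu : ∀ n : ℕ, {l : List E.Ed // l ∈ E.Xset n v} := fun n => u (Opposite.op n) with huu
  -- compatibility: truncation
  have hcompat : ∀ n : ℕ, (uu (n + 1)).1.take n = (uu n).1 := by
    intro n
    have h2 := hu (j := Opposite.op (n + 1)) (j' := Opposite.op n)
      ((homOfLE (Nat.le_succ n)).op)
    have h3 := congrArg Subtype.val h2
    rw [DirGraph.XF_map_val] at h3
    simp only [huu]
    exact h3
  have hlen : ∀ n : ℕ, (uu n).1.length = n := fun n => (uu n).2.2.2.1
  set p : ℕ → E.Ed := fun n => (uu (n + 1)).1[n]'(by rw [hlen]; omega) with hp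
  -- the initial segments of p are the u's
  have hseg : ∀ n : ℕ, (List.range n).map p = (uu n).1 := by
    intro n
    induction n with
    | zero => simp [List.eq_nil_of_length_eq_zero (hlen 0)]
    | succ n ih =>
      rw [List.range_succ, List.map_append, List.map_singleton, ih, ← hcompat n]
      have h3 := List.take_concat_get (l := (uu (n + 1)).1) (i := n) (by rw [hlen]; omega)
      rw [List.concat_eq_append] at h3
      rw [h3, List.take_of_length_le (le_of_eq (hlen (n + 1)))]
  have hmem : ∀ n : ℕ, (List.range n).map p ∈ E.Xset n v := by
    intro n; rw [hseg n]; exact (uu n).2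
  -- p is an infinite path
  have hinf : E.IsInfPath p := by
    intro n
    have hmem2 := hmem (n + 2)
    have hpath := hmem2.1
    rw [DirGraph.IsPath, List.Chain', List.isChain_iff_getElem] at hpath
    have := hpath n (by simp)
    simpa using this
  have hstart : E.s (p 0) = v := by
    have := (hmem 1).2.1
    apply this
    simp [List.range_succ]
  have hlenseg : ∀ n : ℕ, ((List.range n).map p).length = n := by simp
  have hnt : ∀ n : ℕ, 1 ≤ n → ¬ E.Turning v ((List.range n).map p) := by
    intro n hn
    have := (hmem n).2.2.2 n hn le_rfl
    rwa [List.take_of_length_le (le_of_eq (hlenseg n))] at this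
  constructor
  · exact ⟨p, hinf, hstart, hnt⟩
  · intro hY
    obtain ⟨n, hn, β, hβp, hβl, hβe⟩ := hY p hinf
    apply hnt n hn
    refine ⟨β, hβp, by rw [hlenseg n]; exact hβl, ?_⟩
    have hend : E.endV v ((List.range n).map p) = E.s (p n) := by
      obtain ⟨m, rfl⟩ := Nat.exists_eq_add_of_le hn
      rw [Nat.add_comm, List.range_succ, List.map_append, List.map_singleton]
      rw [DirGraph.endV, List.getLast?_concat]
      exact hinf m
    rwa [hend]
end

section
/- Let $R$ be a unital ring and $E$ a directed graph. If the Leavitt path algebra $L_R(E)$, with its canonical $\mathbb{Z}$-gradation, is strongly $\mathbb{Z}$-graded, then $E$ has no sinks. -/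
namespace LPA

/-- Generators of the Leavitt path algebra: vertices, real edges, and ghost edges. -/
inductive LGen (E : DirGraph) : Type
  | vert : E.V → LGen E
  | edge : E.Ed → LGen E
  | ghost : E.Ed → LGen E

/-- Degree of a generator: `0` for vertices, `1` for real edges, `-1` for ghost edges. -/
def gdeg {E : DirGraph} : LGen E → ℤ
  | .vert _ => 0
  | .edge _ => 1
  | .ghost _ => -1

/-- Degree of a word in the generators. -/
def wdeg {E : DirGraph} (w : FreeSemigroup (LGen E)) : ℤ :=
  Multiplicative.toAdd
    (FreeSemigroup.lift (fun x : LGen E => Multiplicative.ofAdd (gdeg x)) w)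

variable (R : Type) [Ring R] (E : DirGraph)

/-- The free (non-unital) `R`-ring on the generators, with `R` commuting with the
generators: the semigroup algebra of the free semigroup on the generators. -/
abbrev FreeLPA : Type := MonoidAlgebra R (FreeSemigroup (LGen E))

/-- A generator, as an element of the free ring. -/
noncomputable def fgen (x : LGen E) : FreeLPA R E :=
  MonoidAlgebra.single (FreeSemigroup.of x) 1

open scoped Classical in
/-- The defining relations (1)–(4) of the Leavitt path algebra. -/
inductive LRel : FreeLPA R E → FreeLPA R E → Prop
  | vert_mul (u v : E.V) :
      LRel (fgen R E (.vert u) * fgen R E (.vert v))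
        (if u = v then fgen R E (.vert v) else 0)
  | src_edge (f : E.Ed) :
      LRel (fgen R E (.vert (E.s f)) * fgen R E (.edge f)) (fgen R E (.edge f))
  | edge_rng (f : E.Ed) :
      LRel (fgen R E (.edge f) * fgen R E (.vert (E.r f))) (fgen R E (.edge f))
  | rng_ghost (f : E.Ed) :
      LRel (fgen R E (.vert (E.r f)) * fgen R E (.ghost f)) (fgen R E (.ghost f))
  | ghost_src (f : E.Ed) :
      LRel (fgen R E (.ghost f) * fgen R E (.vert (E.s f))) (fgen R E (.ghost f))
  | ghost_edge (f f' : E.Ed) :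
      LRel (fgen R E (.ghost f) * fgen R E (.edge f'))
        (if f = f' then fgen R E (.vert (E.r f)) else 0)
  | ck (v : E.V) (A : Finset E.Ed) (hA : A.Nonempty) (hAv : ∀ f, f ∈ A ↔ E.s f = v) :
      LRel (∑ f ∈ A, fgen R E (.edge f) * fgen R E (.ghost f)) (fgen R E (.vert v))

/-- The ring congruence generated by the Leavitt path algebra relations. -/
noncomputable def lcon : RingCon (FreeLPA R E) := ringConGen (LRel R E)

/-- The Leavitt path algebra `L_R(E)`, as a non-unital ring. -/
noncomputable def Leavitt : Type := (lcon R E).Quotient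

noncomputable instance : NonUnitalRing (Leavitt R E) :=
  inferInstanceAs (NonUnitalRing (lcon R E).Quotient)

/-- The quotient map from the free ring onto the Leavitt path algebra. -/
noncomputable def lmk (x : FreeLPA R E) : Leavitt R E := (x : (lcon R E).Quotient)

/-- A generator, as an element of the Leavitt path algebra. -/
noncomputable def gen (x : LGen E) : Leavitt R E := lmk R E (fgen R E x)

/-- The homogeneous component of degree `n` of the canonical `ℤ`-gradation of `L_R(E)`:
the additive subgroup generated by (the images of) all monomials `c·w` with `w` a word
of degree `n` in the generators. -/
noncomputable def LS (n : ℤ) : AddSubgroup (Leavitt R E) :=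
  AddSubgroup.closure
    {x | ∃ (w : FreeSemigroup (LGen E)) (c : R),
      wdeg w = n ∧ x = lmk R E (MonoidAlgebra.single w c)}

/-- The product of two additive subgroups of a (possibly non-unital) ring: the additive
subgroup generated by products. -/
def subMul {S : Type} [NonUnitalRing S] (A B : AddSubgroup S) : AddSubgroup S :=
  AddSubgroup.closure {x | ∃ a ∈ A, ∃ b ∈ B, x = a * b}

/-- `L_R(E)` is strongly `ℤ`-graded: `S_n S_m = S_{n+m}` for all `n, m ∈ ℤ`. -/
noncomputable def StronglyGraded : Prop :=
  ∀ n m : ℤ, subMul (LS R E n) (LS R E m) = LS R E (n + m)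

/-- The element `v·f₁⋯fₙ` of `L_R(E)` associated to a path `α = f₁⋯fₙ` starting at `v`. -/
noncomputable def mkPath (v : E.V) (α : List E.Ed) : Leavitt R E :=
  (α.map fun e => gen R E (.edge e)).foldl (· * ·) (gen R E (.vert v))

/-- The element `fₙ*⋯f₁*·v` of `L_R(E)` associated to the ghost path `α* = fₙ*⋯f₁*`
of a path `α = f₁⋯fₙ` starting at `v`. -/
noncomputable def mkPathStar (v : E.V) (α : List E.Ed) : Leavitt R E :=
  ((α.map fun e => gen R E (.ghost e)).reverse).foldr (· * ·) (gen R E (.vert v))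

end LPA

section SinkProof

open LPA MonoidAlgebra
open scoped Classical

variable (R : Type) [Ring R] (E : DirGraph) (v : E.V)

namespace SinkProof

/-- Source vertex of a list of edges, with default `v` for the empty list. -/
def Sv : List E.Ed → E.V
  | [] => v
  | e :: _ => E.s e

/-- Basis: paths ending at `v` (including the empty path). -/
abbrev Pb := {l : List E.Ed // E.IsPath l ∧ E.endV v l = v}

/-- The module on which `L_R(E)` acts. -/
abbrev MM := Pb E v →₀ R

variable {E v}

theorem r_head {e : E.Ed} {t : List E.Ed}
    (h : E.IsPath (e :: t) ∧ E.endV v (e :: t) = v) : E.r e = Sv E v t := by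
  obtain ⟨h1, h2⟩ := h
  cases t with
  | nil =>
    simpa [DirGraph.endV, Sv] using h2
  | cons e' t' =>
    exact (List.isChain_cons_cons.mp h1).1

theorem tail_mem {e : E.Ed} {t : List E.Ed}
    (h : E.IsPath (e :: t) ∧ E.endV v (e :: t) = v) :
    E.IsPath t ∧ E.endV v t = v := by
  obtain ⟨h1, h2⟩ := h
  refine ⟨(List.isChain_cons.mp h1).2, ?_⟩
  cases t with
  | nil => simp [DirGraph.endV]
  | cons e' t' => simpa [DirGraph.endV] using h2

theorem cons_mem {f : E.Ed} {l : List E.Ed}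
    (hl : E.IsPath l ∧ E.endV v l = v) (h : E.r f = Sv E v l) :
    E.IsPath (f :: l) ∧ E.endV v (f :: l) = v := by
  obtain ⟨h1, h2⟩ := hl
  constructor
  · refine List.isChain_cons.mpr ⟨?_, h1⟩
    intro b hb
    cases l with
    | nil => simp at hb
    | cons e' t' =>
      simp only [List.head?_cons, Option.mem_def, Option.some.injEq] at hb
      subst hb; exact h
  · cases l with
    | nil => simpa [DirGraph.endV, Sv] using h
    | cons e' t' => simpa [DirGraph.endV] using h2

variable (E v)

/-- Action of a generator on a basis element. -/
noncomputable def bact : LGen E → Pb E v → MM R E v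
  | .vert u, p => if Sv E v p.1 = u then Finsupp.single p 1 else 0
  | .edge f, p =>
      if h : E.r f = Sv E v p.1 then Finsupp.single ⟨f :: p.1, cons_mem p.2 h⟩ 1 else 0
  | .ghost f, ⟨[], _⟩ => 0
  | .ghost f, ⟨e :: t, h⟩ => if e = f then Finsupp.single ⟨t, tail_mem h⟩ 1 else 0

/-- Linear extension of the generator action. -/
noncomputable def lact (x : LGen E) : MM R E v →ₗ[R] MM R E v :=
  Finsupp.lsum ℕ fun p => LinearMap.toSpanSingleton R _ (bact R E v x p)

theorem lact_single (x : LGen E) (p : Pb E v) (c : R) :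
    lact R E v x (Finsupp.single p c) = c • bact R E v x p := by
  simp [lact]

/-- Action of words. -/
noncomputable def wact : FreeSemigroup (LGen E) →ₙ* Module.End R (MM R E v) :=
  FreeSemigroup.lift (lact R E v)

/-- The action of the free algebra. -/
noncomputable def act : FreeLPA R E →+ AddMonoid.End (MM R E v) :=
  (Finsupp.liftAddHom fun w =>
    { toFun := fun (c : R) =>
        ((DistribMulAction.toAddMonoidHom (MM R E v) c).comp
          (wact R E v w).toAddMonoidHom : AddMonoid.End (MM R E v))
      map_zero' := AddMonoidHom.ext fun m => by simp
      map_add' := fun a b => AddMonoidHom.ext fun m => by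
        show (a + b) • (wact R E v w) m = _
        rw [add_smul]; rfl }).comp
    (MonoidAlgebra.coeffAddEquiv (R := R) (M := FreeSemigroup (LGen E))).toAddMonoidHom

theorem act_single (w : FreeSemigroup (LGen E)) (c : R) (m : MM R E v) :
    act R E v (MonoidAlgebra.single w c) m = c • wact R E v w m := by
  rw [act, MonoidAlgebra.single]
  erw [Finsupp.liftAddHom_apply_single]
  rfl

theorem act_of (x : LGen E) (p : Pb E v) (c : R) :
    act R E v (fgen R E x) (Finsupp.single p c) = c • bact R E v x p := by
  rw [fgen, act_single]
  simp [wact, FreeSemigroup.lift_of, lact_single]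

theorem act_pair (x y : LGen E) (p : Pb E v) (c : R) :
    act R E v (fgen R E x * fgen R E y) (Finsupp.single p c) =
      c • lact R E v x (bact R E v y p) := by
  rw [fgen, fgen, MonoidAlgebra.single_mul_single, one_mul, act_single]
  simp only [map_mul, wact, FreeSemigroup.lift_of, Module.End.mul_apply]
  rw [lact_single, map_smul, one_smul]

theorem act_mul (x y : FreeLPA R E) :
    act R E v (x * y) = act R E v x * act R E v y := by
  induction x using MonoidAlgebra.induction_linear with
  | zero => simp
  | add f g hf hg => simp only [add_mul, map_add, hf, hg]
  | single w c =>
    induction y using MonoidAlgebra.induction_linear with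
    | zero => simp
    | add f g hf hg => simp only [mul_add, map_add, hf, hg]
    | single w' c' =>
      have : (MonoidAlgebra.single w c : FreeLPA R E) * MonoidAlgebra.single w' c' =
          MonoidAlgebra.single (w * w') (c * c') := MonoidAlgebra.single_mul_single ..
      rw [this]
      refine AddMonoidHom.ext fun m => ?_
      show act R E v (MonoidAlgebra.single (w * w') (c * c')) m = _
      rw [act_single]
      have : (act R E v (MonoidAlgebra.single w c) * act R E v (MonoidAlgebra.single w' c')) m
          = act R E v (MonoidAlgebra.single w c) (act R E v (MonoidAlgebra.single w' c') m) :=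
        rfl
      show _ = act R E v (MonoidAlgebra.single w c) (act R E v (MonoidAlgebra.single w' c') m)
      rw [act_single, act_single, map_smul, map_mul, mul_smul]
      rfl

/-- The congruence given by the action. -/
noncomputable def acon : RingCon (FreeLPA R E) where
  r x y := act R E v x = act R E v y
  iseqv := ⟨fun _ => rfl, Eq.symm, Eq.trans⟩
  add' {a b c d} h1 h2 := by
    show act R E v (a + c) = act R E v (b + d)
    simp only [map_add]; rw [h1, h2]
  mul' {a b c d} h1 h2 := by
    show act R E v (a * c) = act R E v (b * d)
    rw [act_mul, act_mul, h1, h2]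

theorem end_ext {F G : AddMonoid.End (MM R E v)}
    (h : ∀ p (c : R), F (Finsupp.single p c) = G (Finsupp.single p c)) : F = G :=
  Finsupp.addHom_ext h

theorem bact_vert (u : E.V) (p : Pb E v) :
    bact R E v (.vert u) p = if Sv E v p.1 = u then Finsupp.single p 1 else 0 := rfl

theorem bact_edge (f : E.Ed) (p : Pb E v) :
    bact R E v (.edge f) p =
      if h : E.r f = Sv E v p.1 then Finsupp.single ⟨f :: p.1, cons_mem p.2 h⟩ 1 else 0 := rfl

theorem bact_ghost_nil (f : E.Ed) (h) : bact R E v (.ghost f) ⟨[], h⟩ = 0 := rfl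

theorem bact_ghost_cons (f e : E.Ed) (t : List E.Ed) (h) :
    bact R E v (.ghost f) ⟨e :: t, h⟩ =
      if e = f then Finsupp.single ⟨t, tail_mem h⟩ 1 else 0 := rfl

theorem Sv_nil : Sv E v ([] : List E.Ed) = v := rfl

theorem Sv_cons (e : E.Ed) (t : List E.Ed) : Sv E v (e :: t) = E.s e := rfl

theorem rel_act (hv : ∀ e : E.Ed, E.s e ≠ v) :
    ∀ a b, LRel R E a b → act R E v a = act R E v b := by
  intro a b hab
  induction hab with
  | vert_mul u u2 =>
    apply end_ext
    intro p c
    rw [act_pair]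
    by_cases huv : u = u2
    · subst huv
      rw [if_pos rfl, act_of]
      by_cases hs : Sv E v p.1 = u
      · simp [bact_vert, hs, lact_single]
      · simp [bact_vert, hs]
    · rw [if_neg huv]
      by_cases hs : Sv E v p.1 = u2
      · simp [bact_vert, hs, lact_single, Ne.symm huv]
      · simp [bact_vert, hs]
  | src_edge f =>
    apply end_ext
    intro p c
    rw [act_pair, act_of]
    by_cases h : E.r f = Sv E v p.1
    · simp [bact_edge, h, lact_single, bact_vert, Sv_cons]
    · simp [bact_edge, h]
  | edge_rng f =>
    apply end_ext
    intro p c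
    rw [act_pair, act_of]
    by_cases h : E.r f = Sv E v p.1
    · simp [bact_vert, h.symm, lact_single]
    · simp [bact_vert, bact_edge, h, Ne.symm h]
  | rng_ghost f =>
    apply end_ext
    intro p c
    rcases p with ⟨_ | ⟨e, t⟩, hp⟩
    · rw [act_pair, act_of]
      simp [bact_ghost_nil]
    · rw [act_pair, act_of]
      by_cases hef : e = f
      · subst hef
        simp [bact_ghost_cons, lact_single, bact_vert, (r_head hp).symm]
      · simp [bact_ghost_cons, hef]
  | ghost_src f =>
    apply end_ext
    intro p c
    rcases p with ⟨_ | ⟨e, t⟩, hp⟩ <;> rw [act_pair, act_of]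
    · by_cases h : v = E.s f
      · simp [bact_vert, Sv_nil, h, lact_single, bact_ghost_nil]
      · simp [bact_vert, Sv_nil, h, bact_ghost_nil]
    · by_cases h : E.s e = E.s f
      · simp [bact_vert, Sv_cons, h, lact_single]
      · have hef : e ≠ f := fun hh => h (by rw [hh])
        simp [bact_vert, Sv_cons, h, bact_ghost_cons, hef]
  | ghost_edge f f' =>
    apply end_ext
    intro p c
    rw [act_pair]
    by_cases hr : E.r f' = Sv E v p.1
    · simp only [bact_edge, dif_pos hr, lact_single, one_smul]
      by_cases hff : f = f'
      · subst hff
        simp [bact_ghost_cons, act_of, bact_vert, hr.symm, Subtype.coe_eta]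
      · simp [bact_ghost_cons, Ne.symm hff, hff]
    · simp only [bact_edge, dif_neg hr, map_zero, smul_zero]
      by_cases hff : f = f'
      · subst hff
        simp [act_of, bact_vert, Ne.symm hr]
      · rw [if_neg hff]
        simp
  | ck u A hA hAv =>
    apply end_ext
    intro p c
    rw [map_sum]; erw [AddMonoidHom.finset_sum_apply]
    have hterm : ∀ f : E.Ed,
        act R E v (fgen R E (.edge f) * fgen R E (.ghost f)) (Finsupp.single p c)
          = c • lact R E v (.edge f) (bact R E v (.ghost f) p) :=
      fun f => act_pair R E v _ _ p c
    erw [Finset.sum_congr rfl fun f _ => hterm f]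
    obtain ⟨f0, hf0⟩ := hA
    have huv : u ≠ v := fun h => hv f0 (h ▸ (hAv f0).1 hf0)
    rcases p with ⟨_ | ⟨e, t⟩, hp⟩
    · rw [Finset.sum_eq_zero (fun f _ => by simp [bact_ghost_nil])]
      rw [act_of]
      simp [bact_vert, Sv_nil, Ne.symm huv]
    · have hre : E.r e = Sv E v t := r_head hp
      by_cases hsu : E.s e = u
      · have heA : e ∈ A := (hAv e).2 hsu
        rw [Finset.sum_eq_single_of_mem e heA (fun f _ hfe => by
          simp [bact_ghost_cons, Ne.symm hfe])]
        rw [act_of]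
        simp [bact_ghost_cons, lact_single, bact_edge, hre, bact_vert, Sv_cons, hsu]
      · rw [Finset.sum_eq_zero (fun f hf => by
          have hef : e ≠ f := fun h => hsu (h ▸ (hAv f).1 hf)
          simp [bact_ghost_cons, hef])]
        rw [act_of]
        simp [bact_vert, Sv_cons, hsu]

theorem lcon_le (hv : ∀ e : E.Ed, E.s e ≠ v) : lcon R E ≤ acon R E v :=
  RingCon.ringConGen_le.2 fun a b hab => rel_act R E v hv a b hab

theorem wdeg_of (x : LGen E) : wdeg (FreeSemigroup.of x) = gdeg x := by
  simp [wdeg, FreeSemigroup.lift_of]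

theorem wdeg_mul (w w' : FreeSemigroup (LGen E)) : wdeg (w * w') = wdeg w + wdeg w' := by
  simp [wdeg, map_mul, toAdd_mul]

theorem wact_of (x : LGen E) : wact R E v (FreeSemigroup.of x) = lact R E v x := by
  rw [wact, FreeSemigroup.lift_of]

theorem bact_grade (x : LGen E) (p : Pb E v) :
    bact R E v x p = 0 ∨ ∃ q : Pb E v, (q.1.length : ℤ) = p.1.length + gdeg x ∧
      bact R E v x p = Finsupp.single q 1 := by
  cases x with
  | vert u =>
    by_cases h : Sv E v p.1 = u
    · exact Or.inr ⟨p, by simp [gdeg], by rw [bact_vert, if_pos h]⟩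
    · exact Or.inl (by rw [bact_vert, if_neg h])
  | edge f =>
    by_cases h : E.r f = Sv E v p.1
    · refine Or.inr ⟨⟨f :: p.1, cons_mem p.2 h⟩, ?_, by rw [bact_edge, dif_pos h]⟩
      push_cast [gdeg, List.length_cons]
      ring
    · exact Or.inl (by rw [bact_edge, dif_neg h])
  | ghost f =>
    rcases p with ⟨_ | ⟨e, t⟩, hp⟩
    · exact Or.inl rfl
    · by_cases h : e = f
      · refine Or.inr ⟨⟨t, tail_mem hp⟩, ?_, by rw [bact_ghost_cons, if_pos h]⟩
        push_cast [gdeg, List.length_cons]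
        ring
      · exact Or.inl (by rw [bact_ghost_cons, if_neg h])

theorem wact_grade (w : FreeSemigroup (LGen E)) : ∀ p : Pb E v,
    wact R E v w (Finsupp.single p 1) = 0 ∨ ∃ q : Pb E v,
      (q.1.length : ℤ) = p.1.length + wdeg w ∧
      wact R E v w (Finsupp.single p 1) = Finsupp.single q 1 := by
  induction w with
  | ih1 x =>
    intro p
    have hw : wact R E v (FreeSemigroup.of x) = lact R E v x := wact_of R E v x
    rcases bact_grade R E v x p with h0 | ⟨q, hq, hq2⟩
    · exact Or.inl (by rw [hw, lact_single, one_smul, h0])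
    · exact Or.inr ⟨q, by rw [wdeg_of]; exact hq, by rw [hw, lact_single, one_smul, hq2]⟩
  | ih2 x y hx hy =>
    intro p
    have hw : wact R E v (FreeSemigroup.of x * y)
        = lact R E v x * wact R E v y := by
      rw [map_mul, wact_of]
    rcases hy p with h0 | ⟨q, hq, hq2⟩
    · exact Or.inl (by rw [hw, Module.End.mul_apply, h0, map_zero])
    · rcases bact_grade R E v x q with g0 | ⟨q', hq', hq'2⟩
      · exact Or.inl (by rw [hw, Module.End.mul_apply, hq2, lact_single, one_smul, g0])
      · refine Or.inr ⟨q', ?_, by rw [hw, Module.End.mul_apply, hq2, lact_single, one_smul, hq'2]⟩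
        rw [wdeg_mul, wdeg_of, hq', hq]
        ring

/-- The empty path at `v`. -/
def trivP : Pb E v := ⟨[], List.isChain_nil, rfl⟩

theorem lmk_surj (x : Leavitt R E) : ∃ a, lmk R E a = x :=
  Quotient.inductionOn' x fun a => ⟨a, rfl⟩

theorem lmk_add (a b : FreeLPA R E) : lmk R E (a + b) = lmk R E a + lmk R E b := rfl

theorem lmk_mul (a b : FreeLPA R E) : lmk R E (a * b) = lmk R E a * lmk R E b := rfl

theorem lmk_neg (a : FreeLPA R E) : lmk R E (-a) = -(lmk R E a) := rfl

theorem lmk_zero : lmk R E 0 = 0 := rfl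

/-- The evaluation of the Leavitt path algebra at the trivial path. -/
noncomputable def Psi (hv : ∀ e : E.Ed, E.s e ≠ v) : Leavitt R E → MM R E v :=
  Quotient.lift (fun x : FreeLPA R E => act R E v x (Finsupp.single (trivP E v) 1))
    (fun x y hxy => by
      have hc : act R E v x = act R E v y := lcon_le R E v hv hxy
      show act R E v x _ = act R E v y _
      rw [hc])

variable {hv : ∀ e : E.Ed, E.s e ≠ v}

theorem Psi_lmk (hv : ∀ e : E.Ed, E.s e ≠ v) (x : FreeLPA R E) :
    Psi R E v hv (lmk R E x) = act R E v x (Finsupp.single (trivP E v) 1) := rfl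

theorem Psi_add (hv : ∀ e : E.Ed, E.s e ≠ v) (x y : Leavitt R E) :
    Psi R E v hv (x + y) = Psi R E v hv x + Psi R E v hv y := by
  obtain ⟨a, rfl⟩ := lmk_surj R E x
  obtain ⟨b, rfl⟩ := lmk_surj R E y
  rw [← lmk_add, Psi_lmk, Psi_lmk, Psi_lmk, map_add]
  rfl

theorem Psi_neg (hv : ∀ e : E.Ed, E.s e ≠ v) (x : Leavitt R E) :
    Psi R E v hv (-x) = -Psi R E v hv x := by
  obtain ⟨a, rfl⟩ := lmk_surj R E x
  rw [← lmk_neg, Psi_lmk, Psi_lmk, map_neg]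
  rfl

theorem Psi_zero (hv : ∀ e : E.Ed, E.s e ≠ v) : Psi R E v hv (0 : Leavitt R E) = 0 := by
  rw [← lmk_zero, Psi_lmk, map_zero]
  rfl

theorem Psi_LS_neg (hv : ∀ e : E.Ed, E.s e ≠ v) :
    ∀ x ∈ LS R E (-1), Psi R E v hv x = 0 := by
  intro x hx
  refine AddSubgroup.closure_induction ?_ ?_ ?_ ?_ hx
  · rintro y ⟨w, c, hw, rfl⟩
    rw [Psi_lmk]
    have : act R E v (MonoidAlgebra.single w c) (Finsupp.single (trivP E v) 1)
        = c • wact R E v w (Finsupp.single (trivP E v) 1) := act_single R E v w c _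
    rw [this]
    rcases wact_grade R E v w (trivP E v) with h0 | ⟨q, hq, _⟩
    · rw [h0, smul_zero]
    · exfalso
      rw [hw] at hq
      have : ((trivP E v).1.length : ℤ) = 0 := by simp [trivP]
      rw [this] at hq
      omega
  · exact Psi_zero R E v hv
  · intro a b _ _ ha hb
    rw [Psi_add R E v hv, ha, hb, add_zero]
  · intro a _ ha
    rw [Psi_neg R E v hv, ha, neg_zero]

end SinkProof
end SinkProof
/-- If the Leavitt path algebra `L_R(E)` over a (nontrivial) unital ring `R`, with its
canonical `ℤ`-gradation, is strongly `ℤ`-graded, then `E` has no sinks. -/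
theorem noSinks_of_stronglyGraded (R : Type) [Ring R] [Nontrivial R] (E : DirGraph)
    (h : LPA.StronglyGraded R E) : E.NoSinks := by
  intro v
  by_contra hne
  push_neg at hne
  open LPA SinkProof in
  have hmem : gen R E (.vert v) ∈ LS R E 0 :=
    AddSubgroup.subset_closure
      ⟨FreeSemigroup.of (.vert v), 1, by rw [wdeg_of]; rfl, rfl⟩
  have h0 : LPA.subMul (LPA.LS R E 1) (LPA.LS R E (-1)) = LPA.LS R E 0 := by
    have h1 := h 1 (-1)
    norm_num at h1
    exact h1
  rw [← h0] at hmem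
  have hPsi : SinkProof.Psi R E v hne (LPA.gen R E (.vert v)) = 0 := by
    refine AddSubgroup.closure_induction ?_ ?_ ?_ ?_ hmem
    · rintro x ⟨a, ha, b, hb, rfl⟩
      obtain ⟨xa, rfl⟩ := SinkProof.lmk_surj R E a
      obtain ⟨xb, rfl⟩ := SinkProof.lmk_surj R E b
      rw [← SinkProof.lmk_mul, SinkProof.Psi_lmk, SinkProof.act_mul]
      have hb0 : SinkProof.act R E v xb (Finsupp.single (SinkProof.trivP E v) 1) = 0 := by
        have := SinkProof.Psi_LS_neg R E v hne _ hb
        rwa [SinkProof.Psi_lmk] at this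
      show SinkProof.act R E v xa (SinkProof.act R E v xb
        (Finsupp.single (SinkProof.trivP E v) 1)) = 0
      rw [hb0, map_zero]
    · exact SinkProof.Psi_zero R E v hne
    · intro a b _ _ ha hb
      rw [SinkProof.Psi_add R E v hne, ha, hb, add_zero]
    · intro a _ ha
      rw [SinkProof.Psi_neg R E v hne, ha, neg_zero]
  have hval : SinkProof.Psi R E v hne (LPA.gen R E (.vert v))
      = Finsupp.single (SinkProof.trivP E v) (1 : R) := by
    rw [LPA.gen, SinkProof.Psi_lmk, SinkProof.act_of]
    simp [SinkProof.bact_vert, SinkProof.trivP, SinkProof.Sv_nil]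
  rw [hval] at hPsi
  exact one_ne_zero (Finsupp.single_eq_zero.mp hPsi)
end

section
/- Let $R$ be a unital ring and $E$ a directed graph. If the Leavitt path algebra $L_R(E)$, with its canonical $\mathbb{Z}$-gradation, is strongly $\mathbb{Z}$-graded, then $E$ is row-finite (has no infinite emitters). -/
namespace LPAX
open DirGraph LPA

variable (E : DirGraph)

lemma endV_cons (v : E.V) (f : E.Ed) (l : List E.Ed) :
    E.endV v (f :: l) = E.endV (E.r f) l := by
  cases l with
  | nil => rfl
  | cons g t =>
    simp only [DirGraph.endV, List.getLast?_cons_cons]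
    cases hgl : (g :: t).getLast? with
    | none => simp at hgl
    | some e => rfl

/-- `u` is a singular vertex: no CK relation is imposed at `u`. -/
def Sing (u : E.V) : Prop := ¬ ∃ A : Finset E.Ed, A.Nonempty ∧ ∀ f, f ∈ A ↔ E.s f = u

/-- basis of the representation module -/
abbrev Bas : Type := {p : E.V × List E.Ed // E.IsPath p.2 ∧ E.StartsAt p.1 p.2 ∧ Sing E (E.endV p.1 p.2)}

lemma bas_edge (f : E.Ed) (b : Bas E) (h : E.r f = b.1.1) :
    E.IsPath (f :: b.1.2) ∧ E.StartsAt (E.s f) (f :: b.1.2) ∧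
      Sing E (E.endV (E.s f) (f :: b.1.2)) := by
  obtain ⟨⟨w, l⟩, hP, hS, hG⟩ := b
  refine ⟨?_, ?_, ?_⟩
  · exact List.isChain_cons.2 ⟨fun g hg => by rw [h]; exact (hS g hg).symm, hP⟩
  · intro e he; simp at he; simp [he]
  · rw [endV_cons]
    cases l with
    | nil => simpa [DirGraph.endV, h] using hG
    | cons g t =>
      cases hgl : (g :: t).getLast? with
      | none => simp at hgl
      | some e => simpa [DirGraph.endV, hgl] using hG

lemma bas_ghost (f : E.Ed) (b : Bas E) (h : b.1.2.head? = some f) :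
    E.IsPath b.1.2.tail ∧ E.StartsAt (E.r f) b.1.2.tail ∧
      Sing E (E.endV (E.r f) b.1.2.tail) := by
  obtain ⟨⟨w, l⟩, hP, hS, hG⟩ := b
  cases l with
  | nil => simp at h
  | cons g t =>
    simp only [List.head?_cons, Option.some.injEq] at h
    subst h
    simp only [DirGraph.IsPath] at hP ⊢
    replace hP := List.isChain_cons.1 hP
    refine ⟨hP.2, ?_, ?_⟩
    · intro e he; exact ((hP.1 e he)).symm
    · simpa [endV_cons] using hG

variable (R : Type) [Ring R]

abbrev M : Type := Bas E →₀ R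

open scoped Classical in
/-- action of a generator on a basis element -/
noncomputable def genAct : LGen E → Bas E → M E R
  | .vert u, b => if u = b.1.1 then Finsupp.single b 1 else 0
  | .edge f, b => if h : E.r f = b.1.1 then
      Finsupp.single ⟨(E.s f, f :: b.1.2), bas_edge E f b h⟩ 1 else 0
  | .ghost f, b => if h : b.1.2.head? = some f then
      Finsupp.single ⟨(E.r f, b.1.2.tail), bas_ghost E f b h⟩ 1 else 0

/-- action of a generator, as an additive endomorphism -/
noncomputable def sig (x : LGen E) : AddMonoid.End (M E R) :=
  Finsupp.liftAddHom (fun b => ((smulAddHom R (M E R)).flip (genAct E R x b)))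

lemma sig_single (x : LGen E) (b : Bas E) (r : R) :
    sig E R x (Finsupp.single b r) = r • genAct E R x b := by
  exact Finsupp.liftAddHom_apply_single (fun b => ((smulAddHom R (M E R)).flip (genAct E R x b))) b r

/-- each genAct output has prescribed length shift or is zero -/
lemma genAct_deg (x : LGen E) (b : Bas E) :
    genAct E R x b = 0 ∨ ∃ b' : Bas E, genAct E R x b = Finsupp.single b' 1 ∧
      (b'.1.2.length : ℤ) = b.1.2.length + gdeg x := by
  classical
  cases x with
  | vert u =>
    by_cases h : u = b.1.1
    · exact Or.inr ⟨b, by simp [genAct, h], by simp [gdeg]⟩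
    · exact Or.inl (by simp [genAct, h])
  | edge f =>
    by_cases h : E.r f = b.1.1
    · exact Or.inr ⟨⟨(E.s f, f :: b.1.2), bas_edge E f b h⟩, by simp [genAct, h], by simp [gdeg]⟩
    · exact Or.inl (by simp [genAct, h])
  | ghost f =>
    by_cases h : b.1.2.head? = some f
    · refine Or.inr ⟨⟨(E.r f, b.1.2.tail), bas_ghost E f b h⟩, by simp [genAct, h], ?_⟩
      have hne : b.1.2 ≠ [] := by intro hh; rw [hh] at h; simp at h
      have := List.length_tail (l := b.1.2)
      have hpos : 0 < b.1.2.length := List.length_pos_iff.2 hne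
      simp only [gdeg]
      omega
    · exact Or.inl (by simp [genAct, h])

lemma wdeg_of (x : LGen E) : wdeg (FreeSemigroup.of x) = gdeg x := by
  simp [wdeg]

lemma wdeg_mul (w w' : FreeSemigroup (LGen E)) :
    wdeg (w * w') = wdeg w + wdeg w' := by
  simp [wdeg, map_mul]

/-- word action -/
noncomputable def wAct : FreeSemigroup (LGen E) →ₙ* AddMonoid.End (M E R) :=
  FreeSemigroup.lift (sig E R)

lemma wAct_deg (w : FreeSemigroup (LGen E)) (b : Bas E) (r : R) :
    wAct E R w (Finsupp.single b r) = 0 ∨ ∃ b' : Bas E,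
      wAct E R w (Finsupp.single b r) = Finsupp.single b' r ∧
      (b'.1.2.length : ℤ) = b.1.2.length + wdeg w := by
  induction w using FreeSemigroup.recOnMul generalizing b with
  | ih1 x =>
    rcases genAct_deg E R x b with h | ⟨b', hb', hl⟩
    · left; simp [wAct, FreeSemigroup.lift_of, sig_single, h]
    · right; exact ⟨b', by simp [wAct, FreeSemigroup.lift_of, sig_single, hb',
        Finsupp.smul_single', mul_one], by rw [wdeg_of]; exact hl⟩
  | ih2 x y ihx ihy =>
    have hmul : wAct E R (FreeSemigroup.of x * y) (Finsupp.single b r)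
        = wAct E R (FreeSemigroup.of x) (wAct E R y (Finsupp.single b r)) := by
      rw [map_mul]; rfl
    rcases ihy b with h | ⟨b', hb', hl'⟩
    · left; rw [hmul, h]; simp
    · rcases ihx b' with h2 | ⟨b'', hb'', hl''⟩
      · left; rw [hmul, hb', h2]
      · right; refine ⟨b'', by rw [hmul, hb', hb''], ?_⟩
        rw [wdeg_mul, wdeg_of] at *
        omega

/-- left scalar multiplication as additive endomorphism -/
noncomputable def lmul (c : R) : AddMonoid.End (M E R) := Module.toAddMonoidEnd R (M E R) c

lemma lmul_apply (c : R) (m : M E R) : lmul E R c m = c • m := rfl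

lemma sig_comm (x : LGen E) (c : R) :
    sig E R x * lmul E R c = lmul E R c * sig E R x := by
  refine Finsupp.addHom_ext fun b r => ?_
  show sig E R x (lmul E R c (Finsupp.single b r)) = lmul E R c (sig E R x (Finsupp.single b r))
  rw [lmul_apply, Finsupp.smul_single', sig_single, sig_single, lmul_apply, mul_smul]

lemma wAct_comm (w : FreeSemigroup (LGen E)) (c : R) :
    wAct E R w * lmul E R c = lmul E R c * wAct E R w := by
  induction w using FreeSemigroup.recOnMul with
  | ih1 x => simpa [wAct, FreeSemigroup.lift_of] using sig_comm E R x c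
  | ih2 x y ihx ihy =>
    rw [map_mul, mul_assoc, ihy, ← mul_assoc, ihx, mul_assoc]

/-- the representation, as an additive map on the free algebra -/
noncomputable def phi : FreeLPA R E →+ AddMonoid.End (M E R) :=
  (Finsupp.liftAddHom fun w =>
    (AddMonoidHom.mulLeft (wAct E R w)).comp (Module.toAddMonoidEnd R (M E R)).toAddMonoidHom)
      |>.comp MonoidAlgebra.coeffAddEquiv.toAddMonoidHom

lemma phi_single (w : FreeSemigroup (LGen E)) (c : R) :
    phi E R (MonoidAlgebra.single w c) = wAct E R w * lmul E R c := by
  have h : (MonoidAlgebra.single w c : FreeLPA R E).coeff = Finsupp.single w c := rfl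
  rw [phi, AddMonoidHom.comp_apply]; erw [Finsupp.liftAddHom_apply_single]; rfl

lemma phi_mul (x y : FreeLPA R E) : phi E R (x * y) = phi E R x * phi E R y := by
  induction x using MonoidAlgebra.induction_linear with
  | zero => simp
  | add f g hf hg => rw [add_mul, map_add, map_add, hf, hg, add_mul]
  | single w c =>
    induction y using MonoidAlgebra.induction_linear with
    | zero => simp
    | add f g hf hg => rw [mul_add, map_add, map_add, hf, hg, mul_add]
    | single w' c' =>
      rw [show (MonoidAlgebra.single w c * MonoidAlgebra.single w' c' : FreeLPA R E)
          = MonoidAlgebra.single (w * w') (c * c') from MonoidAlgebra.single_mul_single ..]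
      rw [phi_single, phi_single, phi_single, map_mul]
      have : lmul E R (c * c') = lmul E R c * lmul E R c' := by
        simp [lmul, map_mul]
      rw [this, mul_assoc, mul_assoc, ← mul_assoc (lmul E R c), ← wAct_comm, mul_assoc]

lemma phi_fgen (x : LGen E) : phi E R (fgen R E x) = sig E R x := by
  rw [fgen, phi_single]
  have h1 : lmul E R (1 : R) = 1 := by simp [lmul, map_one]
  rw [h1, mul_one]
  show FreeSemigroup.lift (sig E R) (FreeSemigroup.of x) = sig E R x
  rw [FreeSemigroup.lift_of]

open scoped Classical in
lemma sig_vert (u : E.V) (b : Bas E) (r : R) :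
    sig E R (.vert u) (Finsupp.single b r)
      = if u = b.1.1 then Finsupp.single b r else 0 := by
  rw [sig_single]
  show r • (genAct E R (.vert u) b) = _
  rw [genAct]
  split_ifs <;> simp [Finsupp.smul_single']

open scoped Classical in
lemma sig_edge (f : E.Ed) (b : Bas E) (r : R) :
    sig E R (.edge f) (Finsupp.single b r)
      = if h : E.r f = b.1.1 then
          Finsupp.single ⟨(E.s f, f :: b.1.2), bas_edge E f b h⟩ r else 0 := by
  rw [sig_single]
  show r • (genAct E R (.edge f) b) = _
  rw [genAct]
  split_ifs <;> simp [Finsupp.smul_single']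

open scoped Classical in
lemma sig_ghost (f : E.Ed) (b : Bas E) (r : R) :
    sig E R (.ghost f) (Finsupp.single b r)
      = if h : b.1.2.head? = some f then
          Finsupp.single ⟨(E.r f, b.1.2.tail), bas_ghost E f b h⟩ r else 0 := by
  rw [sig_single]
  show r • (genAct E R (.ghost f) b) = _
  rw [genAct]
  split_ifs <;> simp [Finsupp.smul_single']

lemma phi_rel : ∀ a b, LRel R E a b → phi E R a = phi E R b := by
  intro a b hrel
  classical
  cases hrel with
  | vert_mul u v =>
    rw [phi_mul, phi_fgen, phi_fgen]
    by_cases huv : u = v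
    · subst huv
      rw [if_pos rfl, phi_fgen]
      refine Finsupp.addHom_ext fun b r => ?_
      show sig E R (.vert u) (sig E R (.vert u) (Finsupp.single b r))
        = sig E R (.vert u) (Finsupp.single b r)
      rw [sig_vert]
      split_ifs with h
      · rw [sig_vert, if_pos h]
      · simp
    · rw [if_neg huv, map_zero]
      refine Finsupp.addHom_ext fun b r => ?_
      show sig E R (.vert u) (sig E R (.vert v) (Finsupp.single b r)) = 0
      rw [sig_vert]
      split_ifs with h
      · rw [sig_vert, if_neg (fun hu => huv (hu.trans h.symm))]
      · simp
  | src_edge f =>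
    rw [phi_mul, phi_fgen, phi_fgen]
    refine Finsupp.addHom_ext fun b r => ?_
    show sig E R (.vert (E.s f)) (sig E R (.edge f) (Finsupp.single b r))
      = sig E R (.edge f) (Finsupp.single b r)
    rw [sig_edge]
    split_ifs with h
    · rw [sig_vert, if_pos rfl]
    · simp
  | edge_rng f =>
    rw [phi_mul, phi_fgen, phi_fgen]
    refine Finsupp.addHom_ext fun b r => ?_
    show sig E R (.edge f) (sig E R (.vert (E.r f)) (Finsupp.single b r))
      = sig E R (.edge f) (Finsupp.single b r)
    rw [sig_vert]
    split_ifs with h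
    · rfl
    · rw [map_zero, sig_edge, dif_neg h]
  | rng_ghost f =>
    rw [phi_mul, phi_fgen, phi_fgen]
    refine Finsupp.addHom_ext fun b r => ?_
    show sig E R (.vert (E.r f)) (sig E R (.ghost f) (Finsupp.single b r))
      = sig E R (.ghost f) (Finsupp.single b r)
    rw [sig_ghost]
    split_ifs with h
    · rw [sig_vert, if_pos rfl]
    · simp
  | ghost_src f =>
    rw [phi_mul, phi_fgen, phi_fgen]
    refine Finsupp.addHom_ext fun b r => ?_
    show sig E R (.ghost f) (sig E R (.vert (E.s f)) (Finsupp.single b r))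
      = sig E R (.ghost f) (Finsupp.single b r)
    rw [sig_vert]
    split_ifs with h
    · rfl
    · rw [map_zero, sig_ghost, dif_neg]
      intro hh
      exact h (b.2.2.1 f (by rw [hh]; rfl))
  | ghost_edge f f' =>
    rw [phi_mul, phi_fgen, phi_fgen]
    refine Finsupp.addHom_ext fun b r => ?_
    show sig E R (.ghost f) (sig E R (.edge f') (Finsupp.single b r))
      = phi E R (if f = f' then fgen R E (.vert (E.r f)) else 0) (Finsupp.single b r)
    rw [sig_edge]
    split_ifs with h hff hff
    · -- r f' = b.1.1, f = f'
      subst hff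
      rw [sig_ghost, dif_pos (by simp : (f :: b.1.2).head? = some f)]
      rw [phi_fgen, sig_vert, if_pos h]
      congr 1
      exact Subtype.ext (Prod.ext h rfl)
    · -- r f' = b.1.1, f ≠ f'
      rw [sig_ghost, dif_neg (by simp [List.head?_cons]; exact fun hc => hff hc.symm), map_zero]
      rfl
    · -- ¬ r f' = b.1.1, f = f'
      subst hff
      rw [map_zero, phi_fgen, sig_vert, if_neg (fun hc => h hc)]
    · rw [map_zero, map_zero]
      rfl
  | ck v A hA hAv =>
    rw [map_sum]
    refine Finsupp.addHom_ext fun b r => ?_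
    have hterm : ∀ f, phi E R (fgen R E (.edge f) * fgen R E (.ghost f))
        = sig E R (.edge f) * sig E R (.ghost f) := by
      intro f; rw [phi_mul, phi_fgen, phi_fgen]
    show (∑ f ∈ A, phi E R (fgen R E (.edge f) * fgen R E (.ghost f))) (Finsupp.single b r)
      = phi E R (fgen R E (.vert v)) (Finsupp.single b r)
    rw [phi_fgen, show (∑ f ∈ A, phi E R (fgen R E (.edge f) * fgen R E (.ghost f))) (Finsupp.single b r)
      = ∑ f ∈ A, phi E R (fgen R E (.edge f) * fgen R E (.ghost f)) (Finsupp.single b r)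
      from AddMonoidHom.finset_sum_apply _ _ _]
    cases hh : b.1.2.head? with
    | none =>
      have hnil : b.1.2 = [] := List.head?_eq_none_iff.1 hh
      have hsum : ∀ f ∈ A, (phi E R (fgen R E (.edge f) * fgen R E (.ghost f)))
          (Finsupp.single b r) = 0 := by
        intro f _
        rw [hterm]
        show sig E R (.edge f) (sig E R (.ghost f) (Finsupp.single b r)) = 0
        rw [sig_ghost, dif_neg (by rw [hh]; simp), map_zero]
      rw [Finset.sum_eq_zero hsum, sig_vert, if_neg]
      intro hvb
      have hSing := b.2.2.2
      rw [hnil] at hSing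
      exact hSing ⟨A, hA, by rw [hvb] at hAv; exact hAv⟩
    | some g =>
      have hcons : g :: b.1.2.tail = b.1.2 := List.cons_head?_tail (by rw [hh]; rfl)
      have hsg : E.s g = b.1.1 := b.2.2.1 g (by rw [hh]; rfl)
      have hsum : ∀ f ∈ A, (phi E R (fgen R E (.edge f) * fgen R E (.ghost f)))
          (Finsupp.single b r) = if f = g then Finsupp.single b r else 0 := by
        intro f _
        rw [hterm]
        show sig E R (.edge f) (sig E R (.ghost f) (Finsupp.single b r))
          = if f = g then Finsupp.single b r else 0
        by_cases hfg : f = g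
        · subst hfg
          rw [sig_ghost, dif_pos hh, if_pos rfl, sig_edge,
            dif_pos (rfl : E.r f = ((⟨(E.r f, b.1.2.tail), bas_ghost E f b hh⟩ : Bas E)).1.1)]
          congr 1
          exact Subtype.ext (Prod.ext hsg hcons)
        · rw [sig_ghost, dif_neg (by rw [hh]; simp; exact fun hc => hfg hc.symm),
            map_zero, if_neg hfg]
      rw [Finset.sum_congr rfl hsum, Finset.sum_ite_eq' A g (fun _ => Finsupp.single b r),
        sig_vert]
      by_cases hgA : g ∈ A
      · rw [if_pos hgA, if_pos (by rw [← hsg]; exact ((hAv g).1 hgA).symm)]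
      · rw [if_neg hgA, if_neg]
        intro hvb
        exact hgA ((hAv g).2 (by rw [hsg, ← hvb]))

/-- the congruence induced by phi -/
noncomputable def phiCon : RingCon (FreeLPA R E) :=
{ r := fun a b => phi E R a = phi E R b,
  iseqv := ⟨fun _ => rfl, Eq.symm, Eq.trans⟩,
  mul' := by
    intro w x y z h1 h2
    have h1' : phi E R w = phi E R x := h1
    have h2' : phi E R y = phi E R z := h2
    show phi E R (w * y) = phi E R (x * z)
    rw [phi_mul, phi_mul, h1', h2'],
  add' := by
    intro w x y z h1 h2
    have h1' : phi E R w = phi E R x := h1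
    have h2' : phi E R y = phi E R z := h2
    show phi E R (w + y) = phi E R (x + z)
    rw [map_add, map_add, h1', h2'] }

lemma lcon_le : lcon R E ≤ phiCon E R :=
  RingCon.ringConGen_le.2 (phi_rel E R)

/-- phi descends to the Leavitt path algebra -/
noncomputable def phibar (x : Leavitt R E) : AddMonoid.End (M E R) :=
  Quotient.liftOn (α := FreeLPA R E) (s := (lcon R E).toSetoid) x (phi E R)
    (fun _ _ h => lcon_le E R h)

lemma phibar_mk (x : FreeLPA R E) : phibar E R (lmk R E x) = phi E R x := rfl

lemma lmk_surj (a : Leavitt R E) : ∃ x : FreeLPA R E, a = lmk R E x := by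
  obtain ⟨x, hx⟩ := Quotient.exists_rep (a : (lcon R E).Quotient)
  exact ⟨x, hx.symm⟩

lemma phibar_add (a b : Leavitt R E) :
    phibar E R (a + b) = phibar E R a + phibar E R b := by
  obtain ⟨x, rfl⟩ := lmk_surj E R a
  obtain ⟨y, rfl⟩ := lmk_surj E R b
  have : lmk R E x + lmk R E y = lmk R E (x + y) := rfl
  rw [this, phibar_mk, phibar_mk, phibar_mk, map_add]

lemma phibar_mul (a b : Leavitt R E) :
    phibar E R (a * b) = phibar E R a * phibar E R b := by
  obtain ⟨x, rfl⟩ := lmk_surj E R a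
  obtain ⟨y, rfl⟩ := lmk_surj E R b
  have : lmk R E x * lmk R E y = lmk R E (x * y) := rfl
  rw [this, phibar_mk, phibar_mk, phibar_mk, phi_mul]

end LPAX

/-- If the Leavitt path algebra `L_R(E)` over a (nontrivial) unital ring `R`, with its
canonical `ℤ`-gradation, is strongly `ℤ`-graded, then `E` is row-finite. -/
theorem rowFinite_of_stronglyGraded (R : Type) [Ring R] [Nontrivial R] (E : DirGraph)
    (h : LPA.StronglyGraded R E) : E.RowFinite := by
  classical
  intro v₀
  by_contra hv₀
  have hSing : LPAX.Sing E v₀ := by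
    rintro ⟨A, -, hAv⟩
    exact hv₀ (Set.Finite.subset A.finite_toSet (fun f hf => (hAv f).2 hf))
  set b₀ : LPAX.Bas E := ⟨(v₀, []), by
    refine ⟨List.isChain_nil, fun e he => by simp at he, ?_⟩
    simpa [DirGraph.endV] using hSing⟩ with hb₀
  -- the evaluation map
  set ψ : LPA.Leavitt R E →+ LPAX.M E R := AddMonoidHom.mk'
    (fun x => LPAX.phibar E R x (Finsupp.single b₀ 1))
    (fun a b => by
      show LPAX.phibar E R (a + b) (Finsupp.single b₀ 1) = _
      rw [LPAX.phibar_add]; rfl) with hψ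
  -- LS (-1) is killed
  have hneg : LPA.LS R E (-1) ≤ ψ.ker := by
    rw [LPA.LS, AddSubgroup.closure_le]
    rintro x ⟨w, c, hw, rfl⟩
    have : ψ (LPA.lmk R E (MonoidAlgebra.single w c))
        = LPAX.wAct E R w (Finsupp.single b₀ c) := by
      show LPAX.phibar E R (LPA.lmk R E (MonoidAlgebra.single w c)) (Finsupp.single b₀ 1) = _
      rw [LPAX.phibar_mk, LPAX.phi_single]
      show LPAX.wAct E R w (LPAX.lmul E R c (Finsupp.single b₀ 1)) = _
      rw [LPAX.lmul_apply, Finsupp.smul_single', mul_one]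
    rcases LPAX.wAct_deg E R w b₀ c with h0 | ⟨b', _, hlen⟩
    · show ψ (LPA.lmk R E (MonoidAlgebra.single w c)) = 0
      rw [this, h0]
    · exfalso
      rw [hw] at hlen
      have : (b₀.1.2.length : ℤ) = 0 := by norm_num [hb₀]
      omega
  -- the product subgroup is killed
  have hprod : LPA.subMul (LPA.LS R E 1) (LPA.LS R E (-1)) ≤ ψ.ker := by
    rw [LPA.subMul, AddSubgroup.closure_le]
    rintro x ⟨a, -, b, hb, rfl⟩
    have hbk : ψ b = 0 := hneg hb
    show LPAX.phibar E R (a * b) (Finsupp.single b₀ 1) = 0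
    rw [LPAX.phibar_mul]
    show LPAX.phibar E R a (LPAX.phibar E R b (Finsupp.single b₀ 1)) = 0
    have : LPAX.phibar E R b (Finsupp.single b₀ 1) = 0 := hbk
    rw [this, map_zero]
  -- v₀ lies in LS 0
  have hv0mem : LPA.gen R E (.vert v₀) ∈ LPA.LS R E 0 := by
    apply AddSubgroup.subset_closure
    exact ⟨FreeSemigroup.of (.vert v₀), 1, by rw [LPAX.wdeg_of]; rfl, rfl⟩
  have heq := h 1 (-1)
  rw [show (1 : ℤ) + (-1) = 0 from by norm_num] at heq
  rw [← heq] at hv0mem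
  have hker := hprod hv0mem
  rw [AddMonoidHom.mem_ker] at hker
  -- but ψ (gen (vert v₀)) = single b₀ 1 ≠ 0
  have hval : ψ (LPA.gen R E (.vert v₀)) = Finsupp.single b₀ 1 := by
    show LPAX.phibar E R (LPA.lmk R E (LPA.fgen R E (.vert v₀))) (Finsupp.single b₀ 1)
      = Finsupp.single b₀ 1
    rw [LPAX.phibar_mk, LPAX.phi_fgen, LPAX.sig_vert, if_pos rfl]
  rw [hval] at hker
  exact one_ne_zero (Finsupp.single_eq_zero.1 hker)
end

section
/- Let $R$ be a unital ring and $E$ a directed graph. If the Leavitt path algebra $L_R(E)$, with its canonical $\mathbb{Z}$-gradation, is strongly $\mathbb{Z}$-graded, then $E$ satisfies Condition (Y). -/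
namespace CondYProof
open LPA

variable (E : DirGraph)

/-- Infinite paths in `E`, as a subtype. -/
def InfP := {f : ℕ → E.Ed // E.IsInfPath f}

/-- Glue a finite path `δ` onto the tail of `p` starting at position `m`. -/
def glue (δ : List E.Ed) (m : ℕ) (p : ℕ → E.Ed) : ℕ → E.Ed :=
  fun n => if h : n < δ.length then δ[n] else p (m + (n - δ.length))

theorem glue_isInfPath {δ : List E.Ed} {m : ℕ} {p : ℕ → E.Ed}
    (hδ : E.IsPath δ) (hend : ∀ e ∈ δ.getLast?, E.r e = E.s (p m))
    (hp : E.IsInfPath p) : E.IsInfPath (glue E δ m p) := by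
  intro n
  unfold glue
  rcases lt_trichotomy (n + 1) δ.length with h1 | h1 | h1
  · rw [dif_pos (by omega : n < δ.length), dif_pos h1]
    have := List.isChain_iff_getElem.mp hδ n (by omega)
    simpa [List.get_eq_getElem] using this
  · rw [dif_pos (by omega : n < δ.length), dif_neg (by omega)]
    have hne : δ ≠ [] := by intro hcon; simp [hcon] at h1
    have hn : n = δ.length - 1 := by omega
    subst hn
    have hlast : δ.getLast? = some (δ[δ.length - 1]'(by omega)) := by
      rw [List.getLast?_eq_getLast hne, Option.some.injEq, List.getLast_eq_getElem]
    have := hend _ hlast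
    simpa [show δ.length - 1 + 1 - δ.length = 0 by omega] using this
  · rw [dif_neg (by omega), dif_neg (by omega)]
    have : m + (n + 1 - δ.length) = (m + (n - δ.length)) + 1 := by omega
    rw [this]
    exact hp _

/-- Prepend an edge to an infinite path. -/
def consP (f : E.Ed) (q : InfP E) (h : E.r f = E.s (q.1 0)) : InfP E :=
  ⟨fun n => Nat.casesOn n f q.1, by
    intro n
    cases n with
    | zero => exact h
    | succ n => exact q.2 n⟩

/-- Drop the first edge of an infinite path. -/
def tailP (q : InfP E) : InfP E :=
  ⟨fun n => q.1 (n + 1), fun n => q.2 (n + 1)⟩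

/-- `q'` is obtained from `q` by removing a prefix of length `m` and regluing a
finite path `δ`, with `|δ| = m + d`. -/
def Reaches (q q' : InfP E) (d : ℤ) : Prop :=
  ∃ m : ℕ, ∃ δ : List E.Ed, E.IsPath δ ∧ (∀ e ∈ δ.getLast?, E.r e = E.s (q.1 m)) ∧
    ((δ.length : ℤ) = (m : ℤ) + d) ∧ q'.1 = glue E δ m q.1
theorem reaches_trans {q q' q'' : InfP E} {d d' : ℤ}
    (h1 : Reaches E q q' d) (h2 : Reaches E q' q'' d') : Reaches E q q'' (d + d') := by
  obtain ⟨m, δ, hδ, hendδ, hlen, hq'⟩ := h1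
  obtain ⟨m', δ', hδ', hendδ', hlen', hq''⟩ := h2
  by_cases hc : m' ≤ δ.length
  · refine ⟨m, δ' ++ δ.drop m', ?_, ?_, ?_, ?_⟩
    · refine List.isChain_append.mpr ⟨hδ', hδ.suffix (List.drop_suffix _ _), ?_⟩
      intro x hx y hy
      have hr : E.r x = E.s (q'.1 m') := hendδ' x hx
      have hm' : m' < δ.length := by
        by_contra hcon
        rw [List.drop_eq_nil_of_le (by omega)] at hy
        simp at hy
      have hhead : (δ.drop m').head? = some (δ[m']'hm') := by
        rw [List.drop_eq_getElem_cons hm']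
        rfl
      rw [hhead, Option.mem_def, Option.some.injEq] at hy
      have : q'.1 m' = δ[m']'hm' := by
        rw [hq']
        unfold glue
        rw [dif_pos hm']
      rw [hr, this, hy]
    · intro e he
      rcases eq_or_lt_of_le hc with heq | hlt
      · rw [List.drop_eq_nil_of_le (by omega), List.append_nil] at he
        have := hendδ' e he
        rw [this, hq']
        unfold glue
        have harg : m + (m' - δ.length) = m := by omega
        rw [dif_neg (by omega), harg]
      · obtain ⟨t, ht⟩ := List.drop_suffix m' δ
        have hdne : δ.drop m' ≠ [] := by
          intro hcon
          have := congrArg List.length hcon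
          simp only [List.length_drop, List.length_nil] at this
          omega
        rw [List.getLast?_append, List.getLast?_eq_getLast hdne] at he
        simp only [Option.or_some, Option.mem_def, Option.some.injEq] at he
        have hmem : (δ.drop m').getLast ‹_› ∈ (δ.drop m').getLast? :=
          by rw [List.getLast?_eq_getLast hdne]; rfl
        have hmem2 : e ∈ δ.getLast? := by
          rw [← ht, List.getLast?_append, List.getLast?_eq_getLast hdne]
          simpa using he
        exact hendδ e hmem2
    · simp only [List.length_append, List.length_drop]
      omega
    · rw [hq'', hq']
      funext n
      unfold glue
      by_cases hn1 : n < δ'.length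
      · rw [dif_pos hn1, dif_pos (by simp [List.length_append]; omega)]
        exact (List.getElem_append_left hn1).symm
      · have hlen2 : (δ' ++ δ.drop m').length = δ'.length + (δ.length - m') := by
          simp [List.length_append, List.length_drop]
        by_cases hn2 : n < (δ' ++ δ.drop m').length
        · have hn2' : n < δ'.length + (δ.length - m') := by omega
          have hlt : m' + (n - δ'.length) < δ.length := by omega
          rw [dif_neg hn1, dif_pos hlt, dif_pos hn2]
          rw [List.getElem_append_right (by omega : δ'.length ≤ n), List.getElem_drop]
        · have hge : ¬ m' + (n - δ'.length) < δ.length := by omega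
          have harg : m + (m' + (n - δ'.length) - δ.length)
              = m + (n - (δ' ++ δ.drop m').length) := by omega
          rw [dif_neg hn1, dif_neg hge, dif_neg hn2, harg]
  · refine ⟨m + (m' - δ.length), δ', hδ', ?_, ?_, ?_⟩
    · intro e he
      have := hendδ' e he
      rw [this, hq']
      unfold glue
      rw [dif_neg (by omega)]
    · omega
    · rw [hq'', hq']
      funext n
      unfold glue
      by_cases hn1 : n < δ'.length
      · rw [dif_pos hn1, dif_pos hn1]
      · have harg : m + (m' + (n - δ'.length) - δ.length)
            = m + (m' - δ.length) + (n - δ'.length) := by omega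
        rw [dif_neg hn1, dif_neg (by omega : ¬ m' + (n - δ'.length) < δ.length),
          dif_neg hn1, harg]
variable (R : Type) [Ring R]

/-- The module of infinite paths. -/
abbrev MM := InfP E →₀ R

open scoped Classical in
/-- Action of the generators on the module of infinite paths. -/
noncomputable def gmap : LGen E → Module.End Rᵐᵒᵖ (MM E R)
  | .vert u => Finsupp.lsum ℕ fun q =>
      if E.s (q.1 0) = u then Finsupp.lsingle q else 0
  | .edge f => Finsupp.lsum ℕ fun q =>
      if h : E.r f = E.s (q.1 0) then Finsupp.lsingle (consP E f q h) else 0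
  | .ghost f => Finsupp.lsum ℕ fun q =>
      if q.1 0 = f then Finsupp.lsingle (tailP E q) else 0

open scoped Classical in
theorem gmap_vert (u : E.V) (q : InfP E) (r : R) :
    gmap E R (.vert u) (Finsupp.single q r) =
      if E.s (q.1 0) = u then Finsupp.single q r else 0 := by
  rw [gmap, Finsupp.lsum_single]
  split_ifs <;> simp

open scoped Classical in
theorem gmap_edge (f : E.Ed) (q : InfP E) (r : R) :
    gmap E R (.edge f) (Finsupp.single q r) =
      if h : E.r f = E.s (q.1 0) then Finsupp.single (consP E f q h) r else 0 := by
  rw [gmap, Finsupp.lsum_single]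
  split_ifs <;> simp

open scoped Classical in
theorem gmap_ghost (f : E.Ed) (q : InfP E) (r : R) :
    gmap E R (.ghost f) (Finsupp.single q r) =
      if q.1 0 = f then Finsupp.single (tailP E q) r else 0 := by
  rw [gmap, Finsupp.lsum_single]
  split_ifs <;> simp

/-- The action of words in the generators. -/
noncomputable def wordMap : FreeSemigroup (LGen E) →ₙ* Module.End Rᵐᵒᵖ (MM E R) :=
  FreeSemigroup.lift (gmap E R)

/-- A degree-`d` operator acts on basis vectors by killing them or regluing. -/
def Good (d : ℤ) (T : Module.End Rᵐᵒᵖ (MM E R)) : Prop :=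
  ∀ (q : InfP E) (r : R), T (Finsupp.single q r) = 0 ∨
    ∃ q', Reaches E q q' d ∧ T (Finsupp.single q r) = Finsupp.single q' r

theorem reaches_self (q : InfP E) : Reaches E q q 0 := by
  refine ⟨0, [], List.isChain_nil, by simp, by simp, ?_⟩
  funext n
  simp [glue]

theorem good_gmap (x : LGen E) : Good E R (gdeg x) (gmap E R x) := by
  intro q r
  cases x with
  | vert u =>
    rw [gmap_vert]
    split_ifs
    · exact Or.inr ⟨q, reaches_self E q, rfl⟩
    · exact Or.inl rfl
  | edge f =>
    rw [gmap_edge]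
    split_ifs with hf
    · refine Or.inr ⟨consP E f q hf, ⟨0, [f], ?_, ?_, by simp [gdeg], ?_⟩, rfl⟩
      · simp [DirGraph.IsPath, List.Chain']
      · intro e he
        simp at he
        rw [← he]
        exact hf
      · funext n
        cases n with
        | zero => simp [glue, consP]
        | succ n => simp [glue, consP]
    · exact Or.inl rfl
  | ghost f =>
    rw [gmap_ghost]
    split_ifs
    · refine Or.inr ⟨tailP E q, ⟨1, [], List.isChain_nil, by simp, by simp [gdeg], ?_⟩, rfl⟩
      funext n
      simp [glue, tailP, Nat.add_comm]
    · exact Or.inl rfl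

theorem good_mul {d₁ d₂ : ℤ} {T₁ T₂ : Module.End Rᵐᵒᵖ (MM E R)}
    (h1 : Good E R d₁ T₁) (h2 : Good E R d₂ T₂) : Good E R (d₁ + d₂) (T₁ * T₂) := by
  intro q r
  rw [Module.End.mul_apply]
  rcases h2 q r with hz | ⟨q', hr', he'⟩
  · rw [hz, map_zero]
    exact Or.inl rfl
  · rw [he']
    rcases h1 q' r with hz | ⟨q'', hr'', he''⟩
    · rw [hz]
      exact Or.inl rfl
    · rw [he'']
      exact Or.inr ⟨q'', by rw [add_comm]; exact reaches_trans E hr' hr'', rfl⟩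

theorem wdeg_of (x : LGen E) : wdeg (FreeSemigroup.of x) = gdeg x := by
  simp [wdeg, FreeSemigroup.lift_of]

theorem wdeg_mul (w₁ w₂ : FreeSemigroup (LGen E)) : wdeg (w₁ * w₂) = wdeg w₁ + wdeg w₂ := by
  simp [wdeg, map_mul]

theorem good_word (w : FreeSemigroup (LGen E)) : Good E R (wdeg w) (wordMap E R w) := by
  induction w using FreeSemigroup.recOnMul with
  | ih1 x => rw [wdeg_of, wordMap, FreeSemigroup.lift_of]; exact good_gmap E R x
  | ih2 x y hx hy =>
    rw [wdeg_mul, map_mul]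
    exact good_mul E R hx hy
/-- Left multiplication by scalars, as operators commuting with the right structure. -/
noncomputable def lmulHom : R →+* Module.End Rᵐᵒᵖ (MM E R) :=
  Module.toModuleEnd Rᵐᵒᵖ (MM E R)

theorem lmulHom_single (c : R) (q : InfP E) (r : R) :
    lmulHom E R c (Finsupp.single q r) = Finsupp.single q (c * r) := by
  show c • (Finsupp.single q r : MM E R) = _
  rw [Finsupp.smul_single, smul_eq_mul]

theorem gmap_lmul_comm (x : LGen E) (c : R) :
    gmap E R x * lmulHom E R c = lmulHom E R c * gmap E R x := by
  refine Finsupp.lhom_ext fun q r => ?_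
  rw [Module.End.mul_apply, Module.End.mul_apply, lmulHom_single]
  cases x with
  | vert u =>
    rw [gmap_vert, gmap_vert]
    split_ifs
    · rw [lmulHom_single]
    · rw [map_zero]
  | edge f =>
    rw [gmap_edge, gmap_edge]
    split_ifs
    · rw [lmulHom_single]
    · rw [map_zero]
  | ghost f =>
    rw [gmap_ghost, gmap_ghost]
    split_ifs
    · rw [lmulHom_single]
    · rw [map_zero]

theorem wordMap_lmul_comm (w : FreeSemigroup (LGen E)) (c : R) :
    wordMap E R w * lmulHom E R c = lmulHom E R c * wordMap E R w := by
  induction w using FreeSemigroup.recOnMul with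
  | ih1 x => rw [wordMap, FreeSemigroup.lift_of]; exact gmap_lmul_comm E R x c
  | ih2 x y hx hy =>
    rw [map_mul, mul_assoc, hy, ← mul_assoc, hx, mul_assoc]

/-- The representation of the free algebra on the module of infinite paths. -/
noncomputable def phi : FreeLPA R E →+ Module.End Rᵐᵒᵖ (MM E R) :=
  (Finsupp.liftAddHom fun w =>
    (AddMonoidHom.mulRight (wordMap E R w)).comp (lmulHom E R).toAddMonoidHom).comp
      MonoidAlgebra.coeffAddEquiv.toAddMonoidHom

theorem phi_single (w : FreeSemigroup (LGen E)) (c : R) :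
    phi E R (MonoidAlgebra.single w c) = lmulHom E R c * wordMap E R w := by
  show phi E R (MonoidAlgebra.ofCoeff (Finsupp.single w c)) = _
  rw [phi]
  exact Finsupp.liftAddHom_apply_single
    (fun w => (AddMonoidHom.mulRight (wordMap E R w)).comp (lmulHom E R).toAddMonoidHom) w c

theorem phi_mul (x y : FreeLPA R E) : phi E R (x * y) = phi E R x * phi E R y := by
  induction x using MonoidAlgebra.induction_linear with
  | zero => rw [zero_mul, map_zero, zero_mul]
  | add a b ha hb => rw [add_mul, map_add, map_add, ha, hb, add_mul]
  | single w c =>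
    induction y using MonoidAlgebra.induction_linear with
    | zero => rw [mul_zero, map_zero, mul_zero]
    | add a b ha hb => rw [mul_add, map_add, map_add, ha, hb, mul_add]
    | single w' c' =>
      show phi E R (MonoidAlgebra.single w c * MonoidAlgebra.single w' c') = _
      rw [MonoidAlgebra.single_mul_single, phi_single, phi_single, phi_single,
        map_mul, map_mul]
      simp only [← mul_assoc]
      rw [mul_assoc (lmulHom E R c) (lmulHom E R c'), ← wordMap_lmul_comm, ← mul_assoc]
theorem phi_fgen (x : LGen E) : phi E R (fgen R E x) = gmap E R x := by
  rw [fgen, phi_single, map_one, one_mul, wordMap, FreeSemigroup.lift_of]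

theorem tailP_consP (f : E.Ed) (q : InfP E) (h : E.r f = E.s (q.1 0)) :
    tailP E (consP E f q h) = q :=
  Subtype.ext (funext fun _ => rfl)

theorem consP_tailP (q : InfP E) (h : E.r (q.1 0) = E.s ((tailP E q).1 0)) :
    consP E (q.1 0) (tailP E q) h = q := by
  refine Subtype.ext (funext fun n => ?_)
  cases n with
  | zero => rfl
  | succ n => rfl

open scoped Classical in
theorem phi_rel {a b : FreeLPA R E} (h : LRel R E a b) : phi E R a = phi E R b := by
  induction h with
  | vert_mul u v =>
    simp only [phi_mul, phi_fgen]
    by_cases huv : u = v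
    · subst huv
      rw [if_pos rfl, phi_fgen]
      refine Finsupp.lhom_ext fun q r => ?_
      rw [Module.End.mul_apply, gmap_vert]
      split_ifs with h1
      · rw [gmap_vert, if_pos h1]
      · rw [map_zero]
    · rw [if_neg huv, map_zero]
      refine Finsupp.lhom_ext fun q r => ?_
      rw [Module.End.mul_apply, gmap_vert, LinearMap.zero_apply]
      split_ifs with h1
      · rw [gmap_vert, if_neg (fun h2 => huv (h2.symm.trans h1))]
      · rw [map_zero]
  | src_edge f =>
    simp only [phi_mul, phi_fgen]
    refine Finsupp.lhom_ext fun q r => ?_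
    rw [Module.End.mul_apply, gmap_edge]
    split_ifs with h1
    · rw [gmap_vert, if_pos (show E.s ((consP E f q h1).1 0) = E.s f from rfl)]
    · rw [map_zero]
  | edge_rng f =>
    simp only [phi_mul, phi_fgen]
    refine Finsupp.lhom_ext fun q r => ?_
    rw [Module.End.mul_apply, gmap_vert]
    split_ifs with h1
    · rw [gmap_edge]
    · rw [map_zero, gmap_edge, dif_neg (fun h2 => h1 h2.symm)]
  | rng_ghost f =>
    simp only [phi_mul, phi_fgen]
    refine Finsupp.lhom_ext fun q r => ?_
    rw [Module.End.mul_apply, gmap_ghost]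
    split_ifs with h1
    · rw [gmap_vert,
        if_pos (show E.s ((tailP E q).1 0) = E.r f by rw [← h1]; exact (q.2 0).symm)]
    · rw [map_zero]
  | ghost_src f =>
    simp only [phi_mul, phi_fgen]
    refine Finsupp.lhom_ext fun q r => ?_
    rw [Module.End.mul_apply, gmap_vert, gmap_ghost]
    by_cases h1 : q.1 0 = f
    · rw [if_pos (by rw [h1] : E.s (q.1 0) = E.s f), gmap_ghost, if_pos h1]
    · rw [if_neg h1]
      split_ifs with h2
      · rw [gmap_ghost, if_neg h1]
      · rw [map_zero]
  | ghost_edge f f' =>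
    simp only [phi_mul, phi_fgen]
    by_cases hff : f = f'
    · subst hff
      rw [if_pos rfl, phi_fgen]
      refine Finsupp.lhom_ext fun q r => ?_
      rw [Module.End.mul_apply, gmap_edge, gmap_vert]
      by_cases hc : E.r f = E.s (q.1 0)
      · rw [dif_pos hc, if_pos hc.symm, gmap_ghost,
          if_pos (show (consP E f q hc).1 0 = f from rfl), tailP_consP]
      · rw [dif_neg hc, if_neg (fun h2 => hc h2.symm), map_zero]
    · rw [if_neg hff, map_zero]
      refine Finsupp.lhom_ext fun q r => ?_
      rw [Module.End.mul_apply, gmap_edge, LinearMap.zero_apply]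
      split_ifs with h1
      · rw [gmap_ghost,
          if_neg (show ¬ (consP E f' q h1).1 0 = f from fun h2 => hff h2.symm)]
      · rw [map_zero]
  | ck v A hA hAv =>
    rw [map_sum, phi_fgen]
    refine Finsupp.lhom_ext fun q r => ?_
    rw [LinearMap.sum_apply, gmap_vert]
    have hterm : ∀ f ∈ A, phi E R (fgen R E (.edge f) * fgen R E (.ghost f))
        (Finsupp.single q r) = if q.1 0 = f then Finsupp.single q r else 0 := by
      intro f _
      rw [phi_mul, phi_fgen, phi_fgen, Module.End.mul_apply, gmap_ghost]
      split_ifs with h1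
      · subst h1
        rw [gmap_edge, dif_pos (show E.r (q.1 0) = E.s ((tailP E q).1 0) from q.2 0),
          consP_tailP E q]
      · rw [map_zero]
    rw [Finset.sum_congr rfl hterm, Finset.sum_ite_eq A (q.1 0) (fun _ => Finsupp.single q r)]
    have hiff : q.1 0 ∈ A ↔ E.s (q.1 0) = v := hAv _
    by_cases hm : q.1 0 ∈ A
    · rw [if_pos hm, if_pos (hiff.mp hm)]
    · rw [if_neg hm, if_neg (fun hc => hm (hiff.mpr hc))]
theorem lcon_sound {a b : FreeLPA R E} (h : lcon R E a b) : phi E R a = phi E R b := by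
  have hle : lcon R E ≤
      ({ r := fun a b => phi E R a = phi E R b
         iseqv := ⟨fun _ => rfl, Eq.symm, Eq.trans⟩
         mul' := fun h1 h2 => by
           simp only [phi_mul]
           rw [h1, h2]
         add' := fun h1 h2 => by
           simp only [map_add]
           rw [h1, h2] } : RingCon (FreeLPA R E)) :=
    RingCon.ringConGen_le.mpr fun x y hxy => phi_rel E R hxy
  exact hle h

/-- The representation, descended to the Leavitt path algebra. -/
noncomputable def Phi (x : Leavitt R E) : Module.End Rᵐᵒᵖ (MM E R) :=
  Quotient.liftOn' (α := FreeLPA R E) (s₁ := (lcon R E).toSetoid) x (phi E R)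
    (fun _ _ h => lcon_sound E R h)

theorem Phi_lmk (a : FreeLPA R E) : Phi E R (lmk R E a) = phi E R a := rfl

theorem Phi_add (x y : Leavitt R E) : Phi E R (x + y) = Phi E R x + Phi E R y := by
  refine Quotient.inductionOn₂' (x : (lcon R E).Quotient) (y : (lcon R E).Quotient)
    fun a b => ?_
  show Phi E R ((a : (lcon R E).Quotient) + (b : (lcon R E).Quotient)) = _
  rw [← RingCon.coe_add]
  show phi E R (a + b) = phi E R a + phi E R b
  rw [map_add]

theorem Phi_mul (x y : Leavitt R E) : Phi E R (x * y) = Phi E R x * Phi E R y := by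
  refine Quotient.inductionOn₂' (x : (lcon R E).Quotient) (y : (lcon R E).Quotient)
    fun a b => ?_
  show Phi E R ((a : (lcon R E).Quotient) * (b : (lcon R E).Quotient)) = _
  rw [← RingCon.coe_mul]
  show phi E R (a * b) = phi E R a * phi E R b
  rw [phi_mul]

theorem Phi_neg (x : Leavitt R E) : Phi E R (-x) = -Phi E R x := by
  refine Quotient.inductionOn' (x : (lcon R E).Quotient) fun a => ?_
  show Phi E R (-(a : (lcon R E).Quotient)) = _
  rw [← RingCon.coe_neg]
  show phi E R (-a) = -phi E R a
  rw [map_neg]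

theorem Phi_zero : Phi E R (0 : Leavitt R E) = 0 := by
  show Phi E R ((0 : FreeLPA R E) : (lcon R E).Quotient) = 0
  show phi E R 0 = 0
  rw [map_zero]

theorem LS_kill (k : ℤ) (q : InfP E) (hq : ∀ q', ¬ Reaches E q q' k) :
    ∀ x ∈ LS R E k, Phi E R x (Finsupp.single q 1) = 0 := by
  intro x hx
  refine AddSubgroup.closure_induction ?_ ?_ ?_ ?_ hx
  · rintro y ⟨w, c, hw, rfl⟩
    rw [Phi_lmk, phi_single, Module.End.mul_apply]
    rcases (hw ▸ good_word E R w) q 1 with hz | ⟨q', hr, -⟩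
    · rw [hz, map_zero]
    · exact absurd hr (hq q')
  · rw [Phi_zero]
    rfl
  · intro a b _ _ ha hb
    rw [Phi_add, LinearMap.add_apply, ha, hb, add_zero]
  · intro a _ ha
    rw [Phi_neg, LinearMap.neg_apply, ha, neg_zero]

end CondYProof

/-- If the Leavitt path algebra `L_R(E)` over a (nontrivial) unital ring `R`, with its
canonical `ℤ`-gradation, is strongly `ℤ`-graded, then `E` satisfies Condition (Y). -/
theorem condY_of_stronglyGraded (R : Type) [Ring R] [Nontrivial R] (E : DirGraph)
    (h : LPA.StronglyGraded R E) : E.CondY := by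
  intro k hk p hp
  by_contra hno
  push_neg at hno
  open CondYProof LPA in
  · set q : CondYProof.InfP E := ⟨p, hp⟩ with hqdef
    have hkey : ∀ q', ¬ CondYProof.Reaches E q q' (k : ℤ) := by
      rintro q' ⟨m, δ, hδ, hend, hlen, -⟩
      have hlenn : δ.length = m + k := by omega
      have hδne : δ ≠ [] := by
        intro hc
        subst hc
        simp at hlenn
        omega
      obtain ⟨e, he⟩ : ∃ e, δ.getLast? = some e :=
        ⟨δ.getLast hδne, List.getLast?_eq_getLast hδne⟩
      rcases Nat.lt_or_ge m 1 with hm | hm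
      · have hm0 : m = 0 := by omega
        subst hm0
        refine hno 1 le_rfl (δ ++ [p 0]) ?_ ?_ ?_
        · refine List.isChain_append.mpr ⟨hδ, List.isChain_singleton _, ?_⟩
          intro x hx y hy
          simp only [List.head?_cons, Option.mem_def, Option.some.injEq] at hy
          subst hy
          exact hend x hx
        · simp only [List.length_append, List.length_singleton, hlenn]
          omega
        · exact ⟨p 0, List.getLast?_concat, hp 0⟩
      · exact hno m hm δ hδ hlenn ⟨e, he, hend e he⟩
    have hv0 : LPA.gen R E (.vert (E.s (p 0))) ∈ LPA.LS R E ((-(k : ℤ)) + k) := by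
      rw [neg_add_cancel]
      exact AddSubgroup.subset_closure
        ⟨FreeSemigroup.of (.vert (E.s (p 0))), 1, by rw [CondYProof.wdeg_of]; rfl, rfl⟩
    rw [← h (-(k : ℤ)) k] at hv0
    have hzero : CondYProof.Phi E R (LPA.gen R E (.vert (E.s (p 0))))
        (Finsupp.single q 1) = 0 := by
      refine AddSubgroup.closure_induction ?_ ?_ ?_ ?_ hv0
      · rintro x ⟨c1, hc1, c2, hc2, rfl⟩
        rw [CondYProof.Phi_mul, Module.End.mul_apply,
          CondYProof.LS_kill E R k q hkey c2 hc2, map_zero]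
      · rw [CondYProof.Phi_zero]
        rfl
      · intro a b _ _ ha hb
        rw [CondYProof.Phi_add, LinearMap.add_apply, ha, hb, add_zero]
      · intro a _ ha
        rw [CondYProof.Phi_neg, LinearMap.neg_apply, ha, neg_zero]
    have hone : CondYProof.Phi E R (LPA.gen R E (.vert (E.s (p 0))))
        (Finsupp.single q 1) = Finsupp.single q 1 := by
      rw [show LPA.gen R E (.vert (E.s (p 0)))
          = LPA.lmk R E (LPA.fgen R E (.vert (E.s (p 0)))) from rfl,
        CondYProof.Phi_lmk, CondYProof.phi_fgen, CondYProof.gmap_vert, if_pos rfl]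
    rw [hone] at hzero
    exact one_ne_zero (Finsupp.single_eq_zero.mp hzero)
end

section
/- Let $R$ be a unital ring and let $E$ be a row-finite directed graph with no sinks satisfying Condition (Y1). Then for every vertex $v$ of $E$ there exist finitely many finite paths $\alpha_1,\dots,\alpha_m$ such that $v = \sum_{i=1}^m \alpha_i\alpha_i^*$ in $L_R(E)$ and, for each $i$, $r(\alpha_i)$ is a turning node for $\alpha_i$ (i.e. there is a path $\beta_i$ of length $|\alpha_i|+1$ with $r(\beta_i)=r(\alpha_i)$). -/
/-! ### Auxiliary lemmas -/

namespace DirGraph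

variable {E : DirGraph}

def Bad (v : E.V) (l : List E.Ed) : Prop :=
  E.IsPath l ∧ E.StartsAt v l ∧ ∀ i : ℕ, 1 ≤ i → i ≤ l.length → ¬ E.Turning v (l.take i)

variable {v : E.V} {l : List E.Ed} {e : E.Ed}

lemma bad_nil : E.Bad v [] :=
  ⟨List.isChain_nil, fun e he => by simp at he, fun i h1 h2 => by simp at h2; omega⟩

lemma endV_concat : E.endV v (l ++ [e]) = E.r e := by
  simp [endV]

lemma startsAt_take (hs : E.StartsAt v l) (k : ℕ) : E.StartsAt v (l.take k) := by
  intro e he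
  apply hs
  cases l with
  | nil => simpa using he
  | cons a t =>
    cases k with
    | zero => simp at he
    | succ k => simpa using he

lemma bad_take (hb : E.Bad v l) (k : ℕ) : E.Bad v (l.take k) := by
  obtain ⟨hp, hs, ht⟩ := hb
  refine ⟨hp.take k, startsAt_take hs k, fun i h1 h2 => ?_⟩
  rw [List.length_take] at h2
  rw [List.take_take, min_eq_left (by omega)]
  exact ht i h1 (by omega)

lemma bad_of_prefix {l' : List E.Ed} (hb : E.Bad v l') (hpre : l <+: l') : E.Bad v l := by
  rw [List.prefix_iff_eq_take.mp hpre]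
  exact bad_take hb _

lemma isPath_concat (hp : E.IsPath l) (hse : E.s e = E.endV v l) : E.IsPath (l ++ [e]) := by
  rw [IsPath, List.Chain', List.isChain_append]
  refine ⟨hp, List.isChain_singleton _, fun x hx y hy => ?_⟩
  simp only [List.head?_cons, Option.mem_def, Option.some.injEq] at hy
  subst hy
  rw [hse]
  have hx' : l.getLast? = some x := hx
  simp [endV, hx']

lemma startsAt_concat (hs : E.StartsAt v l) (hse : E.s e = E.endV v l) :
    E.StartsAt v (l ++ [e]) := by
  cases l with
  | nil =>
    intro f hf
    simp only [List.nil_append, List.head?_cons, Option.mem_def, Option.some.injEq] at hf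
    subst hf
    simpa [endV] using hse
  | cons a t =>
    intro f hf
    simp only [List.cons_append, List.head?_cons, Option.mem_def, Option.some.injEq] at hf
    subst hf
    exact hs a (by simp)

lemma bad_concat (hb : E.Bad v l) (hse : E.s e = E.endV v l)
    (hnt : ¬ E.Turning v (l ++ [e])) : E.Bad v (l ++ [e]) := by
  obtain ⟨hp, hs, ht⟩ := hb
  refine ⟨isPath_concat hp hse, startsAt_concat hs hse, fun i h1 h2 => ?_⟩
  rw [List.length_append, List.length_singleton] at h2
  rcases Nat.lt_or_ge i (l.length + 1) with h | h
  · rw [List.take_append_of_le_length (by omega)]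
    exact ht i h1 (by omega)
  · have : i = l.length + 1 := by omega
    subst this
    rw [List.take_of_length_le (by simp)]
    exact hnt

lemma s_last_of_path_concat (hp : E.IsPath (l ++ [e])) (hs : E.StartsAt v (l ++ [e])) :
    E.s e = E.endV v l := by
  cases l with
  | nil => simpa [endV] using hs e (by simp)
  | cons a t =>
    rw [IsPath, List.Chain', List.isChain_append] at hp
    obtain ⟨-, -, h⟩ := hp
    cases hx : (a :: t).getLast? with
    | none => simp at hx
    | some x =>
      have := h x hx e (by simp)
      simp [endV, hx, this]

def Unb (E : DirGraph) (v : E.V) (l : List E.Ed) : Prop :=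
  ∀ n : ℕ, ∃ l' : List E.Ed, E.Bad v l' ∧ l <+: l' ∧ n ≤ l'.length

lemma Unb.bad (h : E.Unb v l) : E.Bad v l := by
  obtain ⟨l', hb, hpre, -⟩ := h 0
  exact bad_of_prefix hb hpre

lemma unb_step (hrf : E.RowFinite) (h : E.Unb v l) :
    ∃ e : E.Ed, E.s e = E.endV v l ∧ E.Unb v (l ++ [e]) := by
  by_contra hcon
  push_neg at hcon
  -- for each edge from endV v l, a bound
  have hbd : ∀ e : E.Ed, E.s e = E.endV v l → ∃ N : ℕ, ∀ l' : List E.Ed,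
      E.Bad v l' → (l ++ [e]) <+: l' → l'.length < N := by
    intro e hse
    have := hcon e hse
    rw [Unb] at this
    push_neg at this
    obtain ⟨n, hn⟩ := this
    exact ⟨n, fun l' h1 h2 => by have := hn l' h1 h2; omega⟩
  classical
  set A := (hrf (E.endV v l)).toFinset with hA
  choose Nf hNf using hbd
  set M : ℕ := (A.attach.sup fun e => Nf e.1 ((hrf _).mem_toFinset.mp e.2)) + l.length + 1
  obtain ⟨l', hb, hpre, hlen⟩ := h M
  have hlt : l.length < l'.length := by omega
  set e := l'.get ⟨l.length, hlt⟩ with he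
  have hpre' : (l ++ [e]) <+: l' := by
    have h1 : l = l'.take l.length := List.prefix_iff_eq_take.mp hpre
    have h2 : l'.take l.length ++ [l'.get ⟨l.length, hlt⟩] = l'.take (l.length + 1) := by
      simpa using List.take_concat_get' l' l.length hlt
    rw [List.prefix_iff_eq_take]
    rw [List.length_append, List.length_singleton, ← h2, ← h1]
  have hbad2 : E.Bad v (l ++ [e]) := bad_of_prefix hb hpre'
  have hse : E.s e = E.endV v l := s_last_of_path_concat hbad2.1 hbad2.2.1
  have hmem : e ∈ A := (hrf _).mem_toFinset.mpr hse
  have := hNf e hse l' hb hpre'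
  have hle : Nf e hse ≤ A.attach.sup fun e => Nf e.1 ((hrf _).mem_toFinset.mp e.2) :=
    Finset.le_sup (f := fun e => Nf e.1 ((hrf _).mem_toFinset.mp e.2)) (Finset.mem_attach A ⟨e, hmem⟩)
  omega

lemma exists_bound (hrf : E.RowFinite) (hY1 : E.CondY1) (v : E.V) :
    ∃ N : ℕ, ∀ l : List E.Ed, E.Bad v l → l.length < N := by
  by_contra hcon
  push_neg at hcon
  have h0 : E.Unb v [] := by
    intro n
    obtain ⟨l, hb, hlen⟩ := hcon n
    exact ⟨l, hb, List.nil_prefix, hlen⟩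
  classical
  -- build the sequence
  let step := fun (x : {l : List E.Ed // E.Unb v l}) =>
    (⟨x.1 ++ [(unb_step hrf x.2).choose], (unb_step hrf x.2).choose_spec.2⟩ :
      {l : List E.Ed // E.Unb v l})
  let L : ℕ → {l : List E.Ed // E.Unb v l} := fun n => Nat.rec ⟨[], h0⟩ (fun _ x => step x) n
  have hLsucc : ∀ n, (L (n + 1)).1 = (L n).1 ++ [(unb_step hrf (L n).2).choose] := fun n => rfl
  set p : ℕ → E.Ed := fun n => (unb_step hrf (L n).2).choose with hp
  have hsp : ∀ n, E.s (p n) = E.endV v (L n).1 := fun n => (unb_step hrf (L n).2).choose_spec.1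
  have hrp : ∀ n, E.r (p n) = E.endV v (L (n + 1)).1 := by
    intro n
    rw [hLsucc n, endV_concat]
  have hinf : E.IsInfPath p := by
    intro n
    rw [hrp n, hsp (n + 1)]
  have hlen : ∀ n, (L n).1.length = n := by
    intro n
    induction n with
    | zero => rfl
    | succ n ih => rw [hLsucc n]; simp [ih]
  obtain ⟨n, hn1, β, hβp, hβl, hβe⟩ := hY1 p hinf
  have hbad : E.Bad v (L n).1 := (L n).2.bad
  apply hbad.2.2 n hn1 (by rw [hlen])
  rw [List.take_of_length_le (by rw [hlen])]
  refine ⟨β, hβp, by rw [hβl, hlen], ?_⟩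
  rwa [← hsp n]

end DirGraph

namespace LPA

variable (R : Type) [Ring R] (E : DirGraph)

lemma lmk_rel {x y : FreeLPA R E} (h : LRel R E x y) : lmk R E x = lmk R E y :=
  (RingCon.eq _).mpr (RingConGen.Rel.of x y h)

lemma lmk_mul (x y : FreeLPA R E) : lmk R E (x * y) = lmk R E x * lmk R E y := rfl

noncomputable def lmkHom : FreeLPA R E →+ Leavitt R E :=
  AddMonoidHom.mk' (lmk R E) (fun _ _ => rfl)

lemma gen_vert_mul_vert (v : E.V) :
    gen R E (.vert v) * gen R E (.vert v) = gen R E (.vert v) := by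
  have := lmk_rel R E (LRel.vert_mul v v)
  rw [lmk_mul] at this
  simpa [gen] using this

lemma gen_edge_mul_vert (f : E.Ed) :
    gen R E (.edge f) * gen R E (.vert (E.r f)) = gen R E (.edge f) := by
  have := lmk_rel R E (LRel.edge_rng f)
  rwa [lmk_mul] at this

lemma gen_ck (v : E.V) (A : Finset E.Ed) (hA : A.Nonempty) (hAv : ∀ f, f ∈ A ↔ E.s f = v) :
    ∑ f ∈ A, gen R E (.edge f) * gen R E (.ghost f) = gen R E (.vert v) := by
  have := lmk_rel R E (LRel.ck v A hA hAv)
  rw [show lmk R E = lmkHom R E from rfl, map_sum] at this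
  exact this

lemma mkPath_nil (v : E.V) : mkPath R E v [] = gen R E (.vert v) := rfl

lemma mkPathStar_nil (v : E.V) : mkPathStar R E v [] = gen R E (.vert v) := rfl

lemma mkPath_concat (v : E.V) (l : List E.Ed) (e : E.Ed) :
    mkPath R E v (l ++ [e]) = mkPath R E v l * gen R E (.edge e) := by
  simp [mkPath, List.foldl_append]

lemma mkPathStar_concat (v : E.V) (l : List E.Ed) (e : E.Ed) :
    mkPathStar R E v (l ++ [e]) = gen R E (.ghost e) * mkPathStar R E v l := by
  simp [mkPathStar]

lemma mkPath_mul_vert (v : E.V) (l : List E.Ed) :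
    mkPath R E v l * gen R E (.vert (E.endV v l)) = mkPath R E v l := by
  induction l using List.reverseRecOn with
  | nil => exact gen_vert_mul_vert R E v
  | append_singleton l e ih =>
    rw [DirGraph.endV_concat, mkPath_concat, mul_assoc, gen_edge_mul_vert]

lemma expand (hrf : E.RowFinite) (hns : E.NoSinks) (v : E.V) (l : List E.Ed) :
    mkPath R E v l * mkPathStar R E v l =
      ∑ f ∈ (hrf (E.endV v l)).toFinset,
        mkPath R E v (l ++ [f]) * mkPathStar R E v (l ++ [f]) := by
  classical
  set w := E.endV v l
  have hA : ((hrf w).toFinset).Nonempty := by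
    obtain ⟨e, he⟩ := hns w
    exact ⟨e, (hrf w).mem_toFinset.mpr he⟩
  have hck := gen_ck R E w (hrf w).toFinset hA (fun f => (hrf w).mem_toFinset)
  calc mkPath R E v l * mkPathStar R E v l
      = mkPath R E v l * gen R E (.vert w) * mkPathStar R E v l := by
        rw [mkPath_mul_vert]
    _ = mkPath R E v l * (∑ f ∈ (hrf w).toFinset,
          gen R E (.edge f) * gen R E (.ghost f)) * mkPathStar R E v l := by rw [hck]
    _ = ∑ f ∈ (hrf w).toFinset,
          mkPath R E v (l ++ [f]) * mkPathStar R E v (l ++ [f]) := by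
        rw [Finset.mul_sum, Finset.sum_mul]
        refine Finset.sum_congr rfl (fun f hf => ?_)
        rw [mkPath_concat, mkPathStar_concat]
        simp only [mul_assoc]

end LPA

namespace LPA

open DirGraph in
lemma claim (R : Type) [Ring R] (E : DirGraph) (hrf : E.RowFinite) (hns : E.NoSinks)
    (v : E.V) (N : ℕ) (hN : ∀ l, E.Bad v l → l.length < N) :
    ∀ k l, E.Bad v l → N ≤ l.length + k →
    ∃ L : List (List E.Ed),
      (∀ γ ∈ L, E.IsPath γ ∧ E.StartsAt v γ ∧ E.Turning v γ) ∧
      mkPath R E v l * mkPathStar R E v l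
        = (L.map fun γ => mkPath R E v γ * mkPathStar R E v γ).sum := by
  intro k
  induction k with
  | zero => intro l hb hk; exact absurd (hN l hb) (by omega)
  | succ k ih =>
    intro l hb hk
    classical
    set w := E.endV v l with hw
    set A := (hrf w).toFinset with hA
    have hch : ∀ f : E.Ed, ∃ L : List (List E.Ed),
        (∀ γ ∈ L, E.IsPath γ ∧ E.StartsAt v γ ∧ E.Turning v γ) ∧
        (f ∈ A → mkPath R E v (l ++ [f]) * mkPathStar R E v (l ++ [f])
          = (L.map fun γ => mkPath R E v γ * mkPathStar R E v γ).sum) := by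
      intro f
      by_cases hfA : f ∈ A
      · have hse : E.s f = w := (hrf w).mem_toFinset.mp hfA
        by_cases ht : E.Turning v (l ++ [f])
        · refine ⟨[l ++ [f]], ?_, fun _ => by simp⟩
          intro γ hγ
          simp only [List.mem_singleton] at hγ
          subst hγ
          exact ⟨isPath_concat hb.1 hse, startsAt_concat hb.2.1 hse, ht⟩
        · obtain ⟨L, h1, h2⟩ := ih (l ++ [f]) (bad_concat hb hse ht)
            (by simp only [List.length_append, List.length_singleton]; omega)
          exact ⟨L, h1, fun _ => h2⟩
      · exact ⟨[], by simp, fun h => absurd h hfA⟩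
    choose Ls hLs1 hLs2 using hch
    refine ⟨(A.toList.map Ls).flatten, ?_, ?_⟩
    · intro γ hγ
      rw [List.mem_flatten] at hγ
      obtain ⟨L', hL', hγL⟩ := hγ
      rw [List.mem_map] at hL'
      obtain ⟨f, hf, rfl⟩ := hL'
      exact hLs1 f γ hγL
    · rw [expand R E hrf hns v l, ← Finset.sum_map_toList]
      rw [List.map_flatten, List.sum_flatten, List.map_map, List.map_map]
      congr 1
      refine List.map_congr_left (fun f hf => ?_)
      exact hLs2 f (Finset.mem_toList.mp hf)

end LPA

/-- If `E` is row-finite, has no sinks and satisfies Condition (Y1), then every vertex `v`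
can be written in `L_R(E)` as `v = ∑ᵢ αᵢαᵢ*` with each `αᵢ` a finite path starting at `v`
whose range `r(αᵢ)` is a turning node for `αᵢ`. -/
theorem vert_eq_sum_turning (R : Type) [Ring R] (E : DirGraph)
    (hrf : E.RowFinite) (hns : E.NoSinks) (hY1 : E.CondY1) (v : E.V) :
    ∃ (m : ℕ) (α : Fin m → List E.Ed),
      (∀ i, E.IsPath (α i) ∧ E.StartsAt v (α i) ∧ E.Turning v (α i)) ∧
      LPA.gen R E (.vert v) =
        ∑ i, LPA.mkPath R E v (α i) * LPA.mkPathStar R E v (α i) := by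
  classical
  obtain ⟨N, hN⟩ := DirGraph.exists_bound hrf hY1 v
  obtain ⟨L, hL1, hL2⟩ := LPA.claim R E hrf hns v N hN N [] DirGraph.bad_nil (by simp)
  refine ⟨L.length, fun i => L.get i, ?_, ?_⟩
  · intro i
    exact hL1 (L.get i) (List.get_mem L i)
  · have h0 : LPA.gen R E (.vert v) = LPA.mkPath R E v [] * LPA.mkPathStar R E v [] := by
      rw [LPA.mkPath_nil, LPA.mkPathStar_nil, LPA.gen_vert_mul_vert]
    rw [h0, hL2]
    exact (Fin.sum_univ_fun_getElem L _).symm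
end

section
/- Let $E$ be a directed graph in which every infinite path contains a vertex that is the base of a cycle (i.e. some vertex on the path lies on a closed path). Then $E$ satisfies Condition (Y). -/
set_option linter.unnecessarySimpa false

section Aux

variable {E : DirGraph} {v : E.V}

/-- Gluing paths at `v`. -/
lemma aux_append_path {l₁ l₂ : List E.Ed} (h₁ : E.IsPath l₁) (h₂ : E.IsPath l₂)
    (he : l₁ = [] ∨ E.EndsAt l₁ v) (hs : E.StartsAt v l₂) : E.IsPath (l₁ ++ l₂) := by
  rw [DirGraph.IsPath]; apply List.isChain_append.mpr
  refine ⟨h₁, h₂, ?_⟩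
  intro x hx y hy
  rcases he with rfl | ⟨e, hel, her⟩
  · simp at hx
  · rw [hel] at hx; cases hx
    rw [her, hs y hy]

lemma aux_ends_append {l₁ l₂ : List E.Ed} (he₁ : l₁ = [] ∨ E.EndsAt l₁ v)
    (he₂ : l₂ = [] ∨ E.EndsAt l₂ v) : l₁ ++ l₂ = [] ∨ E.EndsAt (l₁ ++ l₂) v := by
  rcases he₂ with rfl | ⟨e, hel, her⟩
  · simpa using he₁
  · rcases eq_or_ne l₂ [] with rfl | hne
    · simp at hel
    · exact Or.inr ⟨e, by rw [List.getLast?_append_of_ne_nil _ hne, hel], her⟩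

lemma aux_pow (c : List E.Ed) (hc : E.IsPath c) (hs : E.StartsAt v c)
    (he : E.EndsAt c v) (m : ℕ) :
    E.IsPath (List.replicate m c).flatten ∧ E.StartsAt v (List.replicate m c).flatten ∧
      ((List.replicate m c).flatten = [] ∨ E.EndsAt (List.replicate m c).flatten v) := by
  induction m with
  | zero => exact ⟨List.isChain_nil, by intro e he; simp at he, Or.inl rfl⟩
  | succ m ih =>
    rw [List.replicate_succ, List.flatten_cons]
    refine ⟨aux_append_path hc ih.1 (Or.inr he) ih.2.1, ?_, ?_⟩
    · intro e hee
      rcases eq_or_ne c [] with rfl | hne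
      · exact ih.2.1 e (by simpa using hee)
      · rw [List.head?_append_of_ne_nil _ hne] at hee
        exact hs e hee
    · exact aux_ends_append (Or.inr he) ih.2.2

end Aux


/-- If every infinite path of `E` contains a vertex that is the base of a cycle, then `E`
satisfies Condition (Y). -/
theorem condY_of_cycles (E : DirGraph)
    (h : ∀ p : ℕ → E.Ed, E.IsInfPath p → ∃ (n : ℕ) (c : List E.Ed),
      E.IsPath c ∧ c ≠ [] ∧ E.StartsAt (E.s (p n)) c ∧ E.EndsAt c (E.s (p n))) :
    E.CondY := by
  intro k hk p hp
  obtain ⟨n, c, hc, hcne, hcs, hce⟩ := h p hp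
  set v := E.s (p n) with hv
  set L := c.length with hL
  have hL0 : 0 < L := List.length_pos_iff.mpr hcne
  set m := (n + k) / L with hm
  set t := (n + k) % L with ht
  have htL : t < L := Nat.mod_lt _ hL0
  have hmt : m * L + t = n + k := by
    rw [hm, ht, Nat.mul_comm]; exact Nat.div_add_mod (n + k) L
  -- the suffix of c of length t
  set c₁ := c.drop (L - t) with hc₁
  have hc₁len : c₁.length = t := by
    rw [hc₁, List.length_drop, ← hL]; omega
  have hc₁path : E.IsPath c₁ := hc.suffix (List.drop_suffix _ _)
  have hc₁end : c₁ = [] ∨ E.EndsAt c₁ v := by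
    rcases eq_or_ne c₁ [] with hnil | hne
    · exact Or.inl hnil
    · obtain ⟨e, hel, her⟩ := hce
      refine Or.inr ⟨e, ?_, her⟩
      obtain ⟨pre, hpre⟩ := List.drop_suffix (L - t) c
      rw [← hc₁] at hpre
      rw [← hpre, List.getLast?_append_of_ne_nil _ hne] at hel
      exact hel
  obtain ⟨hcm, hcms, hcme⟩ := aux_pow c hc hcs hce m
  refine ⟨n + 1, by omega, c₁ ++ (List.replicate m c).flatten ++ [p n], ?_, ?_, ?_⟩
  · refine aux_append_path (v := v) (aux_append_path hc₁path hcm hc₁end hcms)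
      (List.isChain_singleton _) (aux_ends_append hc₁end hcme) ?_
    intro e hee
    simp only [List.head?_cons, Option.mem_def, Option.some.injEq] at hee
    rw [← hee, hv]
  · simp only [List.length_append, List.length_flatten, List.map_replicate,
      List.length_singleton, hc₁len, List.sum_replicate, smul_eq_mul, ← hL]
    omega
  · exact ⟨p n, by simp, hp n⟩
end
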